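/- arXiv:1802.06483 — 6 statements merged into one kernel-verified Lean document; each statement's English description precedes it below -/
import Mathlib

section
/- Let f = (f_{m,k}) and g = (g_{m,k}) be two families of committee scoring functions defining committee scoring rules R_f and R_g. If R_f = R_g (they select the same winning committees in every election for every committee size), then for each m and k ≤ m there exist a_{m,k} > 0 and b_{m,k} ∈ ℝ such that f_{m,k}(I) = a_{m,k} · g_{m,k}(I) + b_{m,k} for every committee position I ∈ [m]_k. -/
open Finset

/-- A committee (or a committee position) of size `k` among `m` candidates:
positions are 0-indexed elements of `Fin m`. -/
abbrev Committee (m k : ℕ) := {A : Finset (Fin m) // A.card = k}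

/-- The committee position of committee `S` in a vote `v` (a vote assigns to each
candidate its position, position `0` being the best). -/
def commPos {m k : ℕ} (v : Equiv.Perm (Fin m)) (S : Committee m k) : Committee m k :=
  ⟨S.1.image v, by rw [Finset.card_image_of_injective _ v.injective]; exact S.2⟩

/-- An election: a number of voters, each voter a ranking given as the map
candidate ↦ position. -/
structure Election (m : ℕ) where
  n : ℕ
  vote : Fin n → Equiv.Perm (Fin m)

/-- The score of committee `S` under committee scoring function `f`. -/
def score {m k : ℕ} (f : Committee m k → ℝ) (E : Election m) (S : Committee m k) : ℝ :=
  ∑ i : Fin E.n, f (commPos (E.vote i) S)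

/-- The winning committees. -/
def winners {m k : ℕ} (f : Committee m k → ℝ) (E : Election m) : Set (Committee m k) :=
  {S | ∀ T, score f E T ≤ score f E S}

/-- `A` weakly dominates `B`: the sorted position sequences compare pointwise. -/
def Dominates {m : ℕ} (A B : Finset (Fin m)) : Prop :=
  List.Forall₂ (· ≤ ·) (A.sort (· ≤ ·)) (B.sort (· ≤ ·))

/-- A committee scoring function: nonnegative and monotone w.r.t. dominance. -/
structure IsCSF {m k : ℕ} (f : Committee m k → ℝ) : Prop where
  nonneg : ∀ S, 0 ≤ f S
  mono : ∀ A B : Committee m k, Dominates A.1 B.1 → f B ≤ f A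

/-- The `t`-th smallest position in a committee position. -/
def posAt {m k : ℕ} (S : Committee m k) (t : Fin k) : Fin m :=
  (S.1.orderIsoOfFin S.2 t).1

/-- A single-winner scoring function: nonincreasing and nonnegative. -/
def IsSWSF {m : ℕ} (γ : Fin m → ℝ) : Prop :=
  Antitone γ ∧ ∀ i, 0 ≤ γ i

/-- Two families of committee scoring functions define the same multiwinner rule. -/
def SameRule (f g : ∀ m k, Committee m k → ℝ) : Prop :=
  ∀ (m k : ℕ) (E : Election m), winners (f m k) E = winners (g m k) E

/-- `f` is a positive affine transformation of `g`. -/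
def AffEquiv {m k : ℕ} (f g : Committee m k → ℝ) : Prop :=
  ∃ a b : ℝ, 0 < a ∧ ∀ S, f S = a * g S + b

def WeaklySeparable {m k : ℕ} (f : Committee m k → ℝ) : Prop :=
  ∃ γ : Fin m → ℝ, IsSWSF γ ∧ ∀ S : Committee m k, f S = ∑ i ∈ S.1, γ i

def RepFocused {m k : ℕ} (f : Committee m k → ℝ) : Prop :=
  ∃ γ : Fin m → ℝ, IsSWSF γ ∧ ∀ (S : Committee m k) (h : 0 < k), f S = γ (posAt S ⟨0, h⟩)

def TopKCounting {m k : ℕ} (f : Committee m k → ℝ) : Prop :=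
  ∃ g : ℕ → ℝ, (∀ i j, i ≤ j → j ≤ k → g i ≤ g j) ∧ (∀ i, 0 ≤ g i) ∧
    ∀ S : Committee m k, f S = g ((S.1.filter (fun p : Fin m => (p : ℕ) < k)).card)

def OWABased {m k : ℕ} (f : Committee m k → ℝ) : Prop :=
  ∃ (lam : Fin k → ℝ) (γ : Fin m → ℝ), (∀ t, 0 ≤ lam t) ∧ IsSWSF γ ∧
    ∀ S : Committee m k, f S = ∑ t : Fin k, lam t * γ (posAt S t)

def Decomposable {m k : ℕ} (f : Committee m k → ℝ) : Prop :=
  ∃ γ : Fin k → Fin m → ℝ, (∀ t, IsSWSF (γ t)) ∧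
    ∀ S : Committee m k, f S = ∑ t : Fin k, γ t (posAt S t)

/-- Replace the vote of voter `i₀` by `v'`. -/
def replaceVote {m : ℕ} (E : Election m) (i₀ : Fin E.n) (v' : Equiv.Perm (Fin m)) : Election m :=
  ⟨E.n, Function.update E.vote i₀ v'⟩

/-- The `t` highest-ranked (in vote `v`) members of committee `W`. -/
def topMembers {m k : ℕ} (v : Equiv.Perm (Fin m)) (W : Committee m k) (t : ℕ) : Finset (Fin m) :=
  W.1.filter (fun c => (W.1.filter (fun d => v d ≤ v c)).card ≤ t)

/-- `v'` is obtained from `v` by shifting every member of `T` forward by one position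
(candidates outside `T` keep their position or are pushed down by one). -/
def IsPrefixShift {m : ℕ} (v v' : Equiv.Perm (Fin m)) (T : Finset (Fin m)) : Prop :=
  (∀ c ∈ T, (v' c : ℕ) + 1 = (v c : ℕ)) ∧
  (∀ d, d ∉ T → (v' d : ℕ) = (v d : ℕ) ∨ (v' d : ℕ) = (v d : ℕ) + 1)

/-- `t`-prefix monotonicity of the rule defined by the family `f`. -/
def PrefixMonoT (f : ∀ m k, Committee m k → ℝ) (t : ℕ) : Prop :=
  ∀ (m k : ℕ) (E : Election m) (W : Committee m k), W ∈ winners (f m k) E →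
    ∀ (i₀ : Fin E.n) (v' : Equiv.Perm (Fin m)),
      IsPrefixShift (E.vote i₀) v' (topMembers (E.vote i₀) W t) →
      W ∈ winners (f m k) (replaceVote E i₀ v')

/-- Non-crossing monotonicity: shifting a member `c` of a winning committee `W`
forward by one position in one vote, without passing another member of `W`,
keeps `W` winning. -/
def NonCrossingMono (f : ∀ m k, Committee m k → ℝ) : Prop :=
  ∀ (m k : ℕ) (E : Election m) (W : Committee m k), W ∈ winners (f m k) E →
    ∀ (i₀ : Fin E.n) (c q : Fin m), c ∈ W.1 → (q : ℕ) + 1 = (E.vote i₀ c : ℕ) →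
      (E.vote i₀).symm q ∉ W.1 →
      W ∈ winners (f m k) (replaceVote E i₀ ((E.vote i₀).trans (Equiv.swap (E.vote i₀ c) q)))

/-- Narrow-top consistency. -/
def NarrowTopConsistent (f : ∀ m k, Committee m k → ℝ) : Prop :=
  ∀ (m k : ℕ) (E : Election m) (S : Finset (Fin m)), S.card ≤ k →
    (∀ i : Fin E.n, ∃ c ∈ S, (E.vote i c : ℕ) = 0) →
    (∀ c ∈ S, ∃ i : Fin E.n, (E.vote i c : ℕ) = 0) →
    ∀ W : Committee m k, W ∈ winners (f m k) E → S ⊆ W.1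

def NonConstant {m k : ℕ} (f : Committee m k → ℝ) : Prop :=
  ∃ S T : Committee m k, f S ≠ f T

def NonDegenerate (f : ∀ m k, Committee m k → ℝ) : Prop :=
  ∀ m k, 0 < k → k < m → NonConstant (f m k)

/-- Committee-enlargement monotonicity. -/
def CEM (f : ∀ m k, Committee m k → ℝ) : Prop :=
  ∀ (m k : ℕ) (E : Election m), k + 1 ≤ m →
    (∀ W : Committee m k, W ∈ winners (f m k) E →
      ∃ W' : Committee m (k + 1), W' ∈ winners (f m (k + 1)) E ∧ W.1 ⊆ W'.1) ∧
    (∀ W' : Committee m (k + 1), W' ∈ winners (f m (k + 1)) E →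
      ∃ W : Committee m k, W ∈ winners (f m k) E ∧ W.1 ⊆ W'.1)

/-- The SNTV committee scoring function: one point iff the committee contains
the voter's top candidate. -/
noncomputable def sntvF (m k : ℕ) (S : Committee m k) : ℝ :=
  ((S.1.filter (fun p : Fin m => (p : ℕ) = 0)).card : ℝ)

/-- The Bloc committee scoring function: the number of committee members among
the top `k` positions. -/
noncomputable def blocF (m k : ℕ) (S : Committee m k) : ℝ :=
  ((S.1.filter (fun p : Fin m => (p : ℕ) < k)).card : ℝ)

/-- The `k`-Approval Chamberlin–Courant scoring function: one point iff some
committee member is among the top `k` positions. -/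
noncomputable def ccF (m k : ℕ) (S : Committee m k) : ℝ :=
  if (S.1.filter (fun p : Fin m => (p : ℕ) < k)).card = 0 then 0 else 1
section Aux
open Finset

variable {m k : ℕ}

namespace CSFaux

/-- composition of committee positions -/
lemma commPos_trans (v w : Equiv.Perm (Fin m)) (S : Committee m k) :
    commPos v (commPos w S) = commPos (w.trans v) S := by
  apply Subtype.ext
  simp only [commPos, Finset.image_image]
  rfl

lemma commPos_one (S : Committee m k) : commPos 1 S = S := by
  apply Subtype.ext
  simp [commPos]

lemma commPos_inv (v : Equiv.Perm (Fin m)) (S : Committee m k) :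
    commPos v⁻¹ (commPos v S) = S := by
  rw [commPos_trans]
  simp [commPos_one, Equiv.Perm.self_trans_inv]

lemma commPos_inj (v : Equiv.Perm (Fin m)) {S T : Committee m k}
    (h : commPos v S = commPos v T) : S = T := by
  have := congrArg (commPos v⁻¹) h
  rwa [commPos_inv, commPos_inv] at this

lemma card_inter_commPos (v : Equiv.Perm (Fin m)) (S T : Committee m k) :
    (((commPos v S).1 ∩ (commPos v T).1).card) = (S.1 ∩ T.1).card := by
  unfold commPos
  rw [← Finset.image_inter _ _ v.injective,
    Finset.card_image_of_injective _ v.injective]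

end CSFaux
end Aux
namespace CSFaux
open Finset

variable {m k : ℕ}

/-- a strictly monotone ℕ-valued function on Fin q grows at least like i -/
lemma sm_lower {q : ℕ} (F : Fin q → ℕ) (hF : StrictMono F) :
    ∀ (n : ℕ) (hn : n < q), n ≤ F ⟨n, hn⟩ := by
  intro n
  induction' n with n ih
  · intro _; exact Nat.zero_le _
  · intro hn
    have h1 : n ≤ F ⟨n, by omega⟩ := ih (by omega)
    have h2 : F ⟨n, by omega⟩ < F ⟨n + 1, hn⟩ := by
      apply hF; rw [Fin.lt_def]; exact Nat.lt_succ_self n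
    omega

lemma sm_upper {q c : ℕ} (F : Fin q → ℕ) (hF : StrictMono F) (hc : ∀ i, F i < c) :
    ∀ (j : ℕ) (hjq : j < q) (hj : q - 1 - j < q), F ⟨q - 1 - j, hj⟩ + j < c := by
  intro j
  induction' j with j ih
  · intro _ hj; simpa using hc _
  · intro hjq hj
    have hq1 : q - 1 - j < q := by omega
    have hlt : q - 1 - (j+1) < q - 1 - j := by omega
    have h2 : F ⟨q - 1 - (j+1), hj⟩ < F ⟨q - 1 - j, hq1⟩ := by
      apply hF; rw [Fin.lt_def]; exact hlt
    have h1 := ih (by omega) hq1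
    omega

lemma sort_get_strictMono (s : Finset (Fin m)) : StrictMono (s.sort (· ≤ ·)).get :=
  (Finset.sortedLT_sort s).strictMono_get

lemma sort_get_val_sm (s : Finset (Fin m)) :
    StrictMono (fun i => ((s.sort (· ≤ ·)).get i : ℕ)) := by
  intro a b hab
  exact sort_get_strictMono s hab

lemma sort_get_lower (s : Finset (Fin m)) (i : Fin (s.sort (· ≤ ·)).length) :
    i.1 ≤ ((s.sort (· ≤ ·)).get i : ℕ) := by
  have := sm_lower _ (sort_get_val_sm s) i.1 i.2
  simpa using this

lemma sort_get_upper (s : Finset (Fin m)) (i : Fin (s.sort (· ≤ ·)).length) :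
    ((s.sort (· ≤ ·)).get i : ℕ) + ((s.sort (· ≤ ·)).length - 1 - i.1) < m := by
  have h2 := i.2
  have hj : (s.sort (· ≤ ·)).length - 1 - ((s.sort (· ≤ ·)).length - 1 - i.1)
      < (s.sort (· ≤ ·)).length := by omega
  have key := sm_upper _ (sort_get_val_sm s) (fun j => ((s.sort (· ≤ ·)).get j).2)
    ((s.sort (· ≤ ·)).length - 1 - i.1) (by omega) hj
  have he : (⟨(s.sort (· ≤ ·)).length - 1 - ((s.sort (· ≤ ·)).length - 1 - i.1), hj⟩
      : Fin (s.sort (· ≤ ·)).length) = i := by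
    apply Fin.ext; show _ - _ - _ = _; omega
  rw [he] at key
  omega

end CSFaux
namespace CSFaux
open Finset

variable {m k : ℕ}

lemma sm_lower' {q b : ℕ} (F : Fin q → ℕ) (hF : StrictMono F) (hb : ∀ i, b ≤ F i) :
    ∀ (n : ℕ) (hn : n < q), b + n ≤ F ⟨n, hn⟩ := by
  intro n
  induction' n with n ih
  · intro hn; simpa using hb _
  · intro hn
    have h1 : b + n ≤ F ⟨n, by omega⟩ := ih (by omega)
    have h2 : F ⟨n, by omega⟩ < F ⟨n + 1, hn⟩ := by
      apply hF; rw [Fin.lt_def]; exact Nat.lt_succ_self n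
    omega

lemma sort_get_lower' (s : Finset (Fin m)) (b : ℕ) (hb : ∀ a ∈ s, b ≤ (a : ℕ))
    (i : Fin (s.sort (· ≤ ·)).length) :
    b + i.1 ≤ ((s.sort (· ≤ ·)).get i : ℕ) := by
  have key := sm_lower' _ (sort_get_val_sm s)
    (fun j => hb _ ((Finset.mem_sort (α := Fin m) (· ≤ ·)).mp (List.get_mem _ j))) i.1 i.2
  simpa using key

lemma sort_get_upper' (s : Finset (Fin m)) (c : ℕ) (hc : ∀ a ∈ s, (a : ℕ) < c)
    (i : Fin (s.sort (· ≤ ·)).length) :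
    ((s.sort (· ≤ ·)).get i : ℕ) + ((s.sort (· ≤ ·)).length - 1 - i.1) < c := by
  have h2 := i.2
  have hj : (s.sort (· ≤ ·)).length - 1 - ((s.sort (· ≤ ·)).length - 1 - i.1)
      < (s.sort (· ≤ ·)).length := by omega
  have key := sm_upper _ (sort_get_val_sm s)
    (fun j => hc _ ((Finset.mem_sort (α := Fin m) (· ≤ ·)).mp (List.get_mem _ j)))
    ((s.sort (· ≤ ·)).length - 1 - i.1) (by omega) hj
  have he : (⟨(s.sort (· ≤ ·)).length - 1 - ((s.sort (· ≤ ·)).length - 1 - i.1), hj⟩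
      : Fin (s.sort (· ≤ ·)).length) = i := by
    apply Fin.ext; show _ - _ - _ = _; omega
  rw [he] at key
  omega

/-- the top committee position -/
def K0C (hkm : k ≤ m) : Committee m k :=
  ⟨Finset.attachFin (Finset.range k) (fun t ht => lt_of_lt_of_le (Finset.mem_range.mp ht) hkm),
   by rw [Finset.card_attachFin, Finset.card_range]⟩

/-- the bottom committee position -/
def BotC (hkm : k ≤ m) : Committee m k :=
  ⟨Finset.attachFin (Finset.Ico (m - k) m) (fun t ht => (Finset.mem_Ico.mp ht).2),
   by rw [Finset.card_attachFin, Nat.card_Ico]; omega⟩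

lemma dominates_top (hkm : k ≤ m) (z : Committee m k) : Dominates (K0C hkm).1 z.1 := by
  rw [Dominates, List.forall₂_iff_get]
  have l1 : ((K0C hkm).1.sort (· ≤ ·)).length = k := by
    rw [Finset.length_sort, (K0C hkm).2]
  have l2 : (z.1.sort (· ≤ ·)).length = k := by rw [Finset.length_sort, z.2]
  refine ⟨by rw [l1, l2], ?_⟩
  intro i h1 h2
  have hup := sort_get_upper' (K0C hkm).1 k
    (fun a ha => by
      have := Finset.mem_attachFin _ |>.mp ha
      simpa using this) ⟨i, h1⟩
  have hlo := sort_get_lower z.1 ⟨i, h2⟩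
  rw [Fin.le_def]
  simp only at hup hlo
  omega

lemma dominates_bot (hkm : k ≤ m) (z : Committee m k) : Dominates z.1 (BotC hkm).1 := by
  rw [Dominates, List.forall₂_iff_get]
  have l1 : (((BotC hkm).1).sort (· ≤ ·)).length = k := by
    rw [Finset.length_sort, (BotC hkm).2]
  have l2 : (z.1.sort (· ≤ ·)).length = k := by rw [Finset.length_sort, z.2]
  refine ⟨by rw [l1, l2], ?_⟩
  intro i h1 h2
  have hup := sort_get_upper' z.1 m (fun a _ => a.2) ⟨i, h1⟩
  have hlo := sort_get_lower' (BotC hkm).1 (m - k)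
    (fun a ha => by
      have := Finset.mem_attachFin _ |>.mp ha
      exact (Finset.mem_Ico.mp this).1) ⟨i, h2⟩
  rw [Fin.le_def]
  simp only at hup hlo
  omega

end CSFaux
namespace CSFaux
open Finset

variable {m k : ℕ}

/-- extend an injection defined on a finset to a permutation -/
lemma exists_perm_extend {α : Type*} [Fintype α] [DecidableEq α] (W : Finset α)
    (ι : {x // x ∈ W} → α) (hinj : Function.Injective ι) :
    ∃ v : Equiv.Perm α, ∀ (a : α) (h : a ∈ W), v a = ι ⟨a, h⟩ := by
  classical
  set Wi : Finset α := W.attach.image ι with hWi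
  have hccard : (Wᶜ : Finset α).card = (Wiᶜ : Finset α).card := by
    rw [Finset.card_compl, Finset.card_compl, hWi,
      Finset.card_image_of_injective _ hinj, Finset.card_attach]
  let e' := Finset.equivOfCardEq hccard
  have hmemWi : ∀ (a : α) (h : a ∈ W), ι ⟨a, h⟩ ∈ Wi := by
    intro a h
    rw [hWi]
    exact Finset.mem_image.mpr ⟨⟨a, h⟩, Finset.mem_attach _ _, rfl⟩
  set F : α → α := fun a =>
    if h : a ∈ W then ι ⟨a, h⟩ else (e' ⟨a, Finset.mem_compl.mpr h⟩ : α) with hF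
  have hFinj : Function.Injective F := by
    intro a b hab
    rw [hF] at hab
    simp only at hab
    by_cases ha : a ∈ W <;> by_cases hb : b ∈ W
    · rw [dif_pos ha, dif_pos hb] at hab
      have := hinj hab
      exact congrArg Subtype.val this
    · rw [dif_pos ha, dif_neg hb] at hab
      exfalso
      have h1 : ι ⟨a, ha⟩ ∈ Wi := hmemWi a ha
      have h2 : (e' ⟨b, Finset.mem_compl.mpr hb⟩ : α) ∈ Wiᶜ := (e' _).2
      rw [hab] at h1
      exact Finset.mem_compl.mp h2 h1
    · rw [dif_neg ha, dif_pos hb] at hab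
      exfalso
      have h1 : ι ⟨b, hb⟩ ∈ Wi := hmemWi b hb
      have h2 : (e' ⟨a, Finset.mem_compl.mpr ha⟩ : α) ∈ Wiᶜ := (e' _).2
      rw [← hab] at h1
      exact Finset.mem_compl.mp h2 h1
    · rw [dif_neg ha, dif_neg hb] at hab
      have := e'.injective (Subtype.ext hab)
      simpa using congrArg Subtype.val this
  refine ⟨Equiv.ofBijective F (Finite.injective_iff_bijective.mp hFinj), ?_⟩
  intro a h
  show F a = _
  rw [hF]
  simp only
  rw [dif_pos h]

lemma card_sdiff_eq (S T : Finset (Fin m)) : (S \ T).card = S.card - (S ∩ T).card := by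
  have := Finset.card_inter_add_card_sdiff S T
  omega

/-- realizability: a permutation placing two committees at prescribed positions -/
lemma exists_perm_pair (S T x y : Finset (Fin m)) (hS : S.card = x.card)
    (hT : T.card = y.card) (hI : (S ∩ T).card = (x ∩ y).card) :
    ∃ v : Equiv.Perm (Fin m), S.image v = x ∧ T.image v = y := by
  classical
  have c2 : (S \ T).card = (x \ y).card := by
    rw [card_sdiff_eq, card_sdiff_eq, hS, hI]
  have c3 : (T \ S).card = (y \ x).card := by
    rw [card_sdiff_eq, card_sdiff_eq, hT, Finset.inter_comm T S, Finset.inter_comm y x, hI]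
  let e1 := Finset.equivOfCardEq hI
  let e2 := Finset.equivOfCardEq c2
  let e3 := Finset.equivOfCardEq c3
  set W := S ∪ T with hW
  have hcases : ∀ a : {x // x ∈ W}, (a.1 ∈ S ∩ T) ∨ (a.1 ∈ S \ T) ∨ (a.1 ∈ T \ S) := by
    intro a
    have : a.1 ∈ S ∪ T := a.2
    rw [Finset.mem_union] at this
    by_cases h1 : a.1 ∈ S <;> by_cases h2 : a.1 ∈ T
    · exact Or.inl (Finset.mem_inter.mpr ⟨h1, h2⟩)
    · exact Or.inr (Or.inl (Finset.mem_sdiff.mpr ⟨h1, h2⟩))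
    · exact Or.inr (Or.inr (Finset.mem_sdiff.mpr ⟨h2, h1⟩))
    · tauto
  set ι : {a // a ∈ W} → Fin m := fun a =>
    if h1 : a.1 ∈ S ∩ T then (e1 ⟨a.1, h1⟩ : Fin m)
    else if h2 : a.1 ∈ S \ T then (e2 ⟨a.1, h2⟩ : Fin m)
    else if h3 : a.1 ∈ T \ S then (e3 ⟨a.1, h3⟩ : Fin m)
    else a.1 with hι
  have hval : ∀ a : {a // a ∈ W},
      (∃ h1 : a.1 ∈ S ∩ T, ι a = e1 ⟨a.1, h1⟩) ∨ (∃ h2 : a.1 ∈ S \ T, ι a = e2 ⟨a.1, h2⟩)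
        ∨ (∃ h3 : a.1 ∈ T \ S, ι a = e3 ⟨a.1, h3⟩) := by
    intro a
    rcases hcases a with h | h | h
    · exact Or.inl ⟨h, by rw [hι]; simp only; rw [dif_pos h]⟩
    · refine Or.inr (Or.inl ⟨h, ?_⟩)
      have h1 : a.1 ∉ S ∩ T := by
        intro hc
        exact (Finset.mem_sdiff.mp h).2 (Finset.mem_inter.mp hc).2
      rw [hι]; simp only; rw [dif_neg h1, dif_pos h]
    · refine Or.inr (Or.inr ⟨h, ?_⟩)
      have h1 : a.1 ∉ S ∩ T := by
        intro hc
        exact (Finset.mem_sdiff.mp h).2 (Finset.mem_inter.mp hc).1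
      have h2 : a.1 ∉ S \ T := by
        intro hc
        exact (Finset.mem_sdiff.mp hc).2 (Finset.mem_sdiff.mp h).1
      rw [hι]; simp only; rw [dif_neg h1, dif_neg h2, dif_pos h]
  -- membership of values
  have hmem : ∀ a : {a // a ∈ W},
      (a.1 ∈ S ∩ T → ι a ∈ x ∩ y) ∧ (a.1 ∈ S \ T → ι a ∈ x \ y)
        ∧ (a.1 ∈ T \ S → ι a ∈ y \ x) := by
    intro a
    refine ⟨fun h => ?_, fun h => ?_, fun h => ?_⟩
    · rcases hval a with ⟨h1, hv⟩ | ⟨h2, hv⟩ | ⟨h3, hv⟩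
      · rw [hv]; exact (e1 _).2
      · exact absurd h ((Finset.mem_sdiff.mp h2).2 ∘ fun hh => (Finset.mem_inter.mp hh).2)
      · exact absurd (Finset.mem_inter.mp h).1 (Finset.mem_sdiff.mp h3).2
    · rcases hval a with ⟨h1, hv⟩ | ⟨h2, hv⟩ | ⟨h3, hv⟩
      · exact absurd h1 (fun hh => (Finset.mem_sdiff.mp h).2 (Finset.mem_inter.mp hh).2)
      · rw [hv]; exact (e2 _).2
      · exact absurd (Finset.mem_sdiff.mp h).1 (Finset.mem_sdiff.mp h3).2
    · rcases hval a with ⟨h1, hv⟩ | ⟨h2, hv⟩ | ⟨h3, hv⟩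
      · exact absurd (Finset.mem_inter.mp h1).1 (Finset.mem_sdiff.mp h).2
      · exact absurd (Finset.mem_sdiff.mp h2).1 (Finset.mem_sdiff.mp h).2
      · rw [hv]; exact (e3 _).2
  have hdisj1 : ∀ b : Fin m, b ∈ x ∩ y → b ∈ x \ y → False := by
    intro b h1 h2; exact (Finset.mem_sdiff.mp h2).2 (Finset.mem_inter.mp h1).2
  have hdisj2 : ∀ b : Fin m, b ∈ x ∩ y → b ∈ y \ x → False := by
    intro b h1 h2; exact (Finset.mem_sdiff.mp h2).2 (Finset.mem_inter.mp h1).1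
  have hdisj3 : ∀ b : Fin m, b ∈ x \ y → b ∈ y \ x → False := by
    intro b h1 h2; exact (Finset.mem_sdiff.mp h2).2 (Finset.mem_sdiff.mp h1).1
  have hinj : Function.Injective ι := by
    intro a b hab
    apply Subtype.ext
    rcases hval a with ⟨ha, hva⟩ | ⟨ha, hva⟩ | ⟨ha, hva⟩ <;>
      rcases hval b with ⟨hb, hvb⟩ | ⟨hb, hvb⟩ | ⟨hb, hvb⟩ <;>
      rw [hva, hvb] at hab
    · have hh := Subtype.ext_iff.mp (e1.injective (Subtype.ext hab)); exact hh
    · exfalso; apply hdisj1 _ (e1 _).2; rw [hab]; exact (e2 _).2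
    · exfalso; apply hdisj2 _ (e1 _).2; rw [hab]; exact (e3 _).2
    · exfalso; apply hdisj1 _ (e1 _).2; rw [← hab]; exact (e2 _).2
    · have hh := Subtype.ext_iff.mp (e2.injective (Subtype.ext hab)); exact hh
    · exfalso; apply hdisj3 _ (e2 _).2; rw [hab]; exact (e3 _).2
    · exfalso; apply hdisj2 _ (e1 _).2; rw [← hab]; exact (e3 _).2
    · exfalso; apply hdisj3 _ (e2 _).2; rw [← hab]; exact (e3 _).2
    · have hh := Subtype.ext_iff.mp (e3.injective (Subtype.ext hab)); exact hh
  obtain ⟨v, hv⟩ := exists_perm_extend W ι hinj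
  have himg : ∀ (P : Finset (Fin m)) (Q : Finset (Fin m)),
      P.card = Q.card → (∀ a (h : a ∈ P), ∃ hw : a ∈ W, v a = ι ⟨a, hw⟩ ∧ ι ⟨a, hw⟩ ∈ Q) →
      P.image v = Q := by
    intro P Q hc hsub
    apply Finset.eq_of_subset_of_card_le
    · intro b hb
      rw [Finset.mem_image] at hb
      obtain ⟨a, ha, rfl⟩ := hb
      obtain ⟨hw, hva, hm⟩ := hsub a ha
      rw [hva]; exact hm
    · rw [Finset.card_image_of_injective _ v.injective, hc]
  have hSW : ∀ a, a ∈ S → a ∈ W := fun a h => Finset.mem_union_left _ h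
  have hTW : ∀ a, a ∈ T → a ∈ W := fun a h => Finset.mem_union_right _ h
  refine ⟨v, ?_, ?_⟩
  · apply himg S x hS
    intro a h
    refine ⟨hSW a h, hv a _, ?_⟩
    by_cases ht : a ∈ T
    · have h1 : a ∈ S ∩ T := Finset.mem_inter.mpr ⟨h, ht⟩
      have := (hmem ⟨a, hSW a h⟩).1 h1
      exact (Finset.mem_inter.mp this).1
    · have h2 : a ∈ S \ T := Finset.mem_sdiff.mpr ⟨h, ht⟩
      have := (hmem ⟨a, hSW a h⟩).2.1 h2
      exact (Finset.mem_sdiff.mp this).1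
  · apply himg T y hT
    intro a h
    refine ⟨hTW a h, hv a _, ?_⟩
    by_cases hs : a ∈ S
    · have h1 : a ∈ S ∩ T := Finset.mem_inter.mpr ⟨hs, h⟩
      have := (hmem ⟨a, hTW a h⟩).1 h1
      exact (Finset.mem_inter.mp this).2
    · have h2 : a ∈ T \ S := Finset.mem_sdiff.mpr ⟨h, hs⟩
      have := (hmem ⟨a, hTW a h⟩).2.2 h2
      exact (Finset.mem_sdiff.mp this).1

end CSFaux
namespace CSFaux
open Finset

variable {m k : ℕ}

noncomputable def scoreM (f : Committee m k → ℝ) (M : Multiset (Equiv.Perm (Fin m)))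
    (S : Committee m k) : ℝ :=
  (M.map (fun v => f (commPos v S))).sum

noncomputable def toElection (M : Multiset (Equiv.Perm (Fin m))) : Election m :=
  ⟨M.toList.length, fun i => M.toList.get i⟩

lemma score_toElection (f : Committee m k → ℝ) (M : Multiset (Equiv.Perm (Fin m)))
    (S : Committee m k) : score f (toElection M) S = scoreM f M S := by
  unfold score scoreM toElection
  simp only
  conv_rhs => rw [← Multiset.coe_toList M]
  rw [Multiset.map_coe, Multiset.sum_coe, ← Fin.sum_univ_getElem]
  refine Finset.sum_nbij' (fun x => Fin.cast (by simp) x) (fun x => Fin.cast (by simp) x)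
    ?_ ?_ ?_ ?_ ?_ <;> intros <;> simp

lemma winners_toElection (f : Committee m k → ℝ) (M : Multiset (Equiv.Perm (Fin m)))
    (S : Committee m k) :
    S ∈ winners f (toElection M) ↔ ∀ T, scoreM f M T ≤ scoreM f M S := by
  unfold winners
  simp only [Set.mem_setOf_eq]
  constructor
  · intro h T; rw [← score_toElection, ← score_toElection]; exact h T
  · intro h T; rw [score_toElection, score_toElection]; exact h T

lemma scoreM_add (f : Committee m k → ℝ) (M N : Multiset (Equiv.Perm (Fin m)))
    (S : Committee m k) : scoreM f (M + N) S = scoreM f M S + scoreM f N S := by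
  unfold scoreM; rw [Multiset.map_add, Multiset.sum_add]

lemma scoreM_nsmul (f : Committee m k → ℝ) (n : ℕ) (M : Multiset (Equiv.Perm (Fin m)))
    (S : Committee m k) : scoreM f (n • M) S = n * scoreM f M S := by
  induction' n with n ih
  · simp [scoreM]
  · rw [succ_nsmul, scoreM_add, ih]
    push_cast
    ring

lemma scoreM_singleton (f : Committee m k → ℝ) (v : Equiv.Perm (Fin m)) (S : Committee m k) :
    scoreM f {v} S = f (commPos v S) := by
  simp [scoreM]

lemma scoreM_map_trans (f : Committee m k → ℝ) (ψ : Equiv.Perm (Fin m))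
    (M : Multiset (Equiv.Perm (Fin m))) (S : Committee m k) :
    scoreM f (M.map (fun u => ψ.trans u)) S = scoreM f M (commPos ψ S) := by
  unfold scoreM
  rw [Multiset.map_map]
  apply congrArg
  apply Multiset.map_congr rfl
  intro u _
  show f (commPos (ψ.trans u) S) = _
  rw [← commPos_trans]

/-- termwise bound for multiset scores -/
lemma scoreM_le_scoreM (f : Committee m k → ℝ) (M : Multiset (Equiv.Perm (Fin m)))
    (S T : Committee m k) (h : ∀ v ∈ M, f (commPos v S) ≤ f (commPos v T)) :
    scoreM f M S ≤ scoreM f M T :=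
  Multiset.sum_map_le_sum_map _ _ h

lemma scoreM_nonneg (f : Committee m k → ℝ) (hf : ∀ z, 0 ≤ f z)
    (M : Multiset (Equiv.Perm (Fin m))) (S : Committee m k) : 0 ≤ scoreM f M S := by
  unfold scoreM
  apply Multiset.sum_nonneg
  intro a ha
  obtain ⟨v, _, rfl⟩ := Multiset.mem_map.mp ha
  exact hf _

end CSFaux
namespace CSFaux
open Finset

variable {m k : ℕ}

def estep (e : ℕ) (x y : Committee m k) : Prop := (x.1 ∩ y.1).card = e

lemma committee_card_pos (x : Committee m k) (hk : 0 < k) : x.1.Nonempty := by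
  rw [← Finset.card_pos, x.2]; exact hk

lemma sdiff_card_eq_sdiff_card (x y : Committee m k) : (x.1 \ y.1).card = (y.1 \ x.1).card := by
  have h1 := Finset.card_inter_add_card_sdiff x.1 y.1
  have h2 := Finset.card_inter_add_card_sdiff y.1 x.1
  rw [Finset.inter_comm] at h2
  rw [x.2] at h1; rw [y.2] at h2
  omega

lemma adj_chain (x y : Committee m k) :
    Relation.ReflTransGen (estep (k - 1)) x y := by
  classical
  obtain ⟨n, hn⟩ : ∃ n, (x.1 \ y.1).card = n := ⟨_, rfl⟩
  induction' n with n ih generalizing x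
  · have hxy : x = y := by
      apply Subtype.ext
      apply Finset.eq_of_subset_of_card_le _ (by rw [x.2, y.2])
      intro a ha
      by_contra hc
      have : a ∈ x.1 \ y.1 := Finset.mem_sdiff.mpr ⟨ha, hc⟩
      rw [Finset.card_eq_zero.mp hn] at this
      simp at this
    rw [hxy]
  · -- pick elements to swap
    have hx : (x.1 \ y.1).Nonempty := by rw [← Finset.card_pos, hn]; omega
    have hy : (y.1 \ x.1).Nonempty := by
      rw [← Finset.card_pos, ← sdiff_card_eq_sdiff_card, hn]; omega
    obtain ⟨a, ha⟩ := hx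
    obtain ⟨b, hb⟩ := hy
    rw [Finset.mem_sdiff] at ha hb
    have hk1 : 1 ≤ k := by
      have := Finset.card_pos.mpr ⟨a, ha.1⟩; rw [x.2] at this; omega
    have hbx : b ∉ x.1.erase a := fun hc => hb.2 (Finset.mem_of_mem_erase hc)
    set x' : Committee m k := ⟨insert b (x.1.erase a), by
      rw [Finset.card_insert_of_notMem hbx, Finset.card_erase_of_mem ha.1, x.2]
      omega⟩ with hx'
    have hstep : estep (k - 1) x x' := by
      show (x.1 ∩ (insert b (x.1.erase a))).card = k - 1
      have : x.1 ∩ (insert b (x.1.erase a)) = x.1.erase a := by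
        ext c
        simp only [Finset.mem_inter, Finset.mem_insert, Finset.mem_erase]
        constructor
        · rintro ⟨hcx, hc | hc⟩
          · exact absurd (hc ▸ hcx) hb.2
          · exact hc
        · intro hc; exact ⟨hc.2, Or.inr hc⟩
      rw [this, Finset.card_erase_of_mem ha.1, x.2]
    have hrest : (x'.1 \ y.1).card = n := by
      have : x'.1 \ y.1 = (x.1 \ y.1).erase a := by
        ext c
        simp only [hx', Finset.mem_sdiff, Finset.mem_insert, Finset.mem_erase]
        constructor
        · rintro ⟨hc | hc, hcy⟩
          · exact absurd (hc ▸ hb.1) hcy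
          · exact ⟨hc.1, hc.2, hcy⟩
        · rintro ⟨hca, hcx, hcy⟩
          exact ⟨Or.inr ⟨hca, hcx⟩, hcy⟩
      rw [this, Finset.card_erase_of_mem (Finset.mem_sdiff.mpr ha), hn]
      omega
    exact Relation.ReflTransGen.head hstep (ih x' hrest)

lemma card_inter_le (x y : Committee m k) : (x.1 ∩ y.1).card ≤ k :=
  le_trans (Finset.card_le_card Finset.inter_subset_left) (le_of_eq x.2)

lemma card_union_committees (x y : Committee m k) :
    (x.1 ∪ y.1).card = 2 * k - (x.1 ∩ y.1).card := by
  have h1 := Finset.card_union_add_card_inter x.1 y.1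
  have hx := x.2
  have hy := y.2
  have hle := card_inter_le x y
  omega

lemma card_inter_ge (x y : Committee m k) : 2 * k ≤ m + (x.1 ∩ y.1).card := by
  have h1 := card_union_committees x y
  have h2 : (x.1 ∪ y.1).card ≤ m := by
    have := Finset.card_le_card (Finset.subset_univ (x.1 ∪ y.1))
    simpa using this
  have := card_inter_le x y
  omega

/-- lift one adjacency step to two e-steps -/
lemma lift_adj (e : ℕ) (hadm : 2 * k ≤ m + e) (hek : e + 1 ≤ k)
    (hcond : 2 * k < m + e ∨ 1 ≤ e)
    (x y : Committee m k) (hadj : (x.1 ∩ y.1).card = k - 1) (hk : 1 ≤ k) :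
    ∃ z : Committee m k, estep e x z ∧ estep e z y := by
  classical
  by_cases hc : 2 * k < m + e
  · -- z := B ∪ C with B ⊆ x∩y, C outside x∪y
    obtain ⟨B, hBsub, hBcard⟩ := Finset.exists_subset_card_eq
      (show e ≤ (x.1 ∩ y.1).card by rw [hadj]; omega)
    have hcompl : k - e ≤ ((x.1 ∪ y.1)ᶜ : Finset (Fin m)).card := by
      rw [Finset.card_compl, card_union_committees x y, hadj]
      simp only [Fintype.card_fin]
      omega
    obtain ⟨C, hCsub, hCcard⟩ := Finset.exists_subset_card_eq hcompl
    have hdisj : ∀ c ∈ C, c ∉ x.1 ∪ y.1 := fun c hc' =>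
      Finset.mem_compl.mp (hCsub hc')
    have hBC : Disjoint B C := by
      rw [Finset.disjoint_left]
      intro c hcB hcC
      exact hdisj c hcC (Finset.mem_union_left _ ((Finset.inter_subset_left) (hBsub hcB)))
    refine ⟨⟨B ∪ C, by rw [Finset.card_union_of_disjoint hBC, hBcard, hCcard]; omega⟩, ?_, ?_⟩
    · show (x.1 ∩ (B ∪ C)).card = e
      have : x.1 ∩ (B ∪ C) = B := by
        ext c
        simp only [Finset.mem_inter, Finset.mem_union]
        constructor
        · rintro ⟨hcx, hc | hc⟩
          · exact hc
          · exact absurd (Finset.mem_union_left _ hcx) (hdisj c hc)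
        · intro hc
          exact ⟨Finset.inter_subset_left (hBsub hc), Or.inl hc⟩
      rw [this, hBcard]
    · show ((B ∪ C) ∩ y.1).card = e
      have : (B ∪ C) ∩ y.1 = B := by
        ext c
        simp only [Finset.mem_inter, Finset.mem_union]
        constructor
        · rintro ⟨hc | hc, hcy⟩
          · exact hc
          · exact absurd (Finset.mem_union_right _ hcy) (hdisj c hc)
        · intro hc
          exact ⟨Or.inl hc, Finset.inter_subset_right (hBsub hc)⟩
      rw [this, hBcard]
  · -- m + e = 2k case: z := (x∩y)ᶜ ∪ W
    have hme : m + e = 2 * k := by omega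
    have he1 : 1 ≤ e := by
      rcases hcond with h | h
      · omega
      · exact h
    obtain ⟨W, hWsub, hWcard⟩ := Finset.exists_subset_card_eq
      (show e - 1 ≤ (x.1 ∩ y.1).card by rw [hadj]; omega)
    have hWdisj : Disjoint ((x.1 ∩ y.1)ᶜ : Finset (Fin m)) W := by
      rw [Finset.disjoint_right]
      intro c hcW hcc
      exact Finset.mem_compl.mp hcc (hWsub hcW)
    have hcc : ((x.1 ∩ y.1)ᶜ : Finset (Fin m)).card = m - (k - 1) := by
      rw [Finset.card_compl, hadj]; simp
    set z : Committee m k := ⟨(x.1 ∩ y.1)ᶜ ∪ W, by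
      rw [Finset.card_union_of_disjoint hWdisj, hcc, hWcard]; omega⟩ with hz
    have hxz : x.1 ∩ ((x.1 ∩ y.1)ᶜ ∪ W) = (x.1 \ y.1) ∪ W := by
      ext c
      simp only [Finset.mem_inter, Finset.mem_union, Finset.mem_compl, Finset.mem_sdiff]
      constructor
      · rintro ⟨hcx, hc | hc⟩
        · exact Or.inl ⟨hcx, fun hcy => hc ⟨hcx, hcy⟩⟩
        · exact Or.inr hc
      · rintro (⟨hcx, hcy⟩ | hc)
        · exact ⟨hcx, Or.inl (fun hcc => hcy hcc.2)⟩
        · have hcxy := hWsub hc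
          exact ⟨(Finset.mem_inter.mp hcxy).1, Or.inr hc⟩
    have hdxy : (x.1 \ y.1).card = 1 := by
      have := Finset.card_inter_add_card_sdiff x.1 y.1
      rw [x.2, hadj] at this
      omega
    have hWd2 : Disjoint (x.1 \ y.1) W := by
      rw [Finset.disjoint_left]
      intro c hc hcW
      exact (Finset.mem_sdiff.mp hc).2 (Finset.mem_inter.mp (hWsub hcW)).2
    refine ⟨z, ?_, ?_⟩
    · show (x.1 ∩ ((x.1 ∩ y.1)ᶜ ∪ W)).card = e
      rw [hxz, Finset.card_union_of_disjoint hWd2, hdxy, hWcard]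
      omega
    · show (((x.1 ∩ y.1)ᶜ ∪ W) ∩ y.1).card = e
      have hyz : ((x.1 ∩ y.1)ᶜ ∪ W) ∩ y.1 = (y.1 \ x.1) ∪ W := by
        ext c
        simp only [Finset.mem_inter, Finset.mem_union, Finset.mem_compl, Finset.mem_sdiff]
        constructor
        · rintro ⟨hc | hc, hcy⟩
          · exact Or.inl ⟨hcy, fun hcx => hc ⟨hcx, hcy⟩⟩
          · exact Or.inr hc
        · rintro (⟨hcy, hcx⟩ | hc)
          · exact ⟨Or.inl (fun hcc => hcx hcc.1), hcy⟩
          · have hcxy := hWsub hc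
            exact ⟨Or.inr hc, (Finset.mem_inter.mp hcxy).2⟩
      have hdyx : (y.1 \ x.1).card = 1 := by
        rw [← sdiff_card_eq_sdiff_card]; exact hdxy
      have hWd3 : Disjoint (y.1 \ x.1) W := by
        rw [Finset.disjoint_left]
        intro c hc hcW
        exact (Finset.mem_sdiff.mp hc).2 (Finset.mem_inter.mp (hWsub hcW)).1
      rw [hyz, Finset.card_union_of_disjoint hWd3, hdyx, hWcard]
      omega

/-- connectivity of the e-intersection graph -/
lemma estep_conn (e : ℕ) (hadm : 2 * k ≤ m + e) (hek : e + 1 ≤ k)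
    (hbad : m + e = 2 * k → e = 0 → k = 1) (hk : 1 ≤ k) :
    ∀ x y : Committee m k, Relation.ReflTransGen (estep e) x y := by
  intro x y
  by_cases hke : e = k - 1
  · rw [hke] at *
    exact adj_chain x y
  · have hcond : 2 * k < m + e ∨ 1 ≤ e := by
      by_contra hc
      push_neg at hc
      have h1 : m + e = 2 * k := by omega
      have h2 : e = 0 := by omega
      have := hbad h1 h2
      omega
    have hchain := adj_chain x y
    induction hchain with
    | refl => exact Relation.ReflTransGen.refl
    | tail hab hbc ih =>
        obtain ⟨z, h1, h2⟩ := lift_adj e hadm hek hcond _ _ hbc hk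
        exact ih.trans ((Relation.ReflTransGen.single h1).tail h2)

end CSFaux
namespace CSFaux
open Finset

variable {m k : ℕ}

lemma attachFin_inter (s t : Finset ℕ) (hs : ∀ a ∈ s, a < m) (ht : ∀ a ∈ t, a < m) :
    (Finset.attachFin s hs) ∩ (Finset.attachFin t ht)
      = Finset.attachFin (s ∩ t) (fun a ha => hs a (Finset.mem_inter.mp ha).1) := by
  ext a
  simp [Finset.mem_attachFin]

lemma inter_K0_Bot (hkm : k ≤ m) :
    ((K0C hkm).1 ∩ (BotC (m := m) hkm).1).card = k - (m - k) := by
  unfold K0C BotC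
  rw [attachFin_inter, Finset.card_attachFin]
  have : Finset.range k ∩ Finset.Ico (m - k) m = Finset.Ico (m - k) k := by
    ext t
    simp only [Finset.mem_inter, Finset.mem_range, Finset.mem_Ico]
    omega
  rw [this, Nat.card_Ico]

/-- representative committee with prescribed intersection with the top committee -/
lemma exists_rep (hkm : k ≤ m) (d : ℕ) (h1 : 2 * k ≤ m + d) (h2 : d ≤ k) :
    ∃ U : Committee m k, (U.1 ∩ (K0C hkm).1).card = d := by
  have hbound : ∀ a ∈ Finset.range d ∪ Finset.Ico k (2 * k - d), a < m := by
    intro a ha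
    rcases Finset.mem_union.mp ha with h | h
    · have := Finset.mem_range.mp h; omega
    · have := Finset.mem_Ico.mp h; omega
  have hdisj : Disjoint (Finset.range d) (Finset.Ico k (2 * k - d)) := by
    rw [Finset.disjoint_left]
    intro a ha hb
    have := Finset.mem_range.mp ha
    have := Finset.mem_Ico.mp hb
    omega
  refine ⟨⟨Finset.attachFin _ hbound, ?_⟩, ?_⟩
  · rw [Finset.card_attachFin, Finset.card_union_of_disjoint hdisj,
      Finset.card_range, Nat.card_Ico]
    omega
  · unfold K0C
    rw [attachFin_inter, Finset.card_attachFin]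
    have : (Finset.range d ∪ Finset.Ico k (2 * k - d)) ∩ Finset.range k
        = Finset.range d := by
      ext t
      simp only [Finset.mem_inter, Finset.mem_union, Finset.mem_range, Finset.mem_Ico]
      omega
    rw [this, Finset.card_range]

lemma K0_ne_Bot (hkm : k < m) (hk : 1 ≤ k) :
    K0C (le_of_lt hkm) ≠ BotC (m := m) (le_of_lt hkm) := by
  intro h
  have := inter_K0_Bot (le_of_lt hkm)
  rw [h] at this
  rw [Finset.inter_self, (BotC (m := m) (le_of_lt hkm)).2] at this
  omega

/-- path from the top to the bottom committee in the d-intersection graph -/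
lemma path_K0_Bot (hk : 1 ≤ k) (hkm : k < m) (d : ℕ) (hd1 : 2 * k ≤ m + d)
    (hd2 : d + 1 ≤ k) :
    Relation.ReflTransGen (estep d) (K0C (le_of_lt hkm)) (BotC (le_of_lt hkm)) := by
  by_cases hdl : 2 * k < m + d
  · exact estep_conn d hd1 hd2 (fun h1 _ => by omega) hk _ _
  · apply Relation.ReflTransGen.single
    show ((K0C _).1 ∩ (BotC _).1).card = d
    rw [inter_K0_Bot]
    omega

/-- along a path from a point satisfying P to one not satisfying it,
there is a step crossing the frontier -/
lemma frontier_of_path {X : Type*} {r : X → X → Prop} {P : X → Prop} {x y : X}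
    (hpath : Relation.ReflTransGen r x y) (hx : P x) (hy : ¬ P y) :
    ∃ a b, r a b ∧ P a ∧ ¬ P b := by
  induction hpath with
  | refl => exact absurd hx hy
  | @tail b c hab hbc ih =>
      by_cases hPb : P b
      · exact ⟨b, c, hbc, hPb, hy⟩
      · exact ih hPb

end CSFaux
namespace CSFaux
open Finset

section Engine

variable {m k : ℕ}

lemma scoreM_zero (φ : Committee m k → ℝ) (U : Committee m k) : scoreM φ 0 U = 0 := by
  simp [scoreM]

lemma scoreM_finset (φ : Committee m k → ℝ) (F : Finset (Equiv.Perm (Fin m)))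
    (U : Committee m k) : scoreM φ F.val U = ∑ u ∈ F, φ (commPos u U) := by
  rfl

lemma scoreM_sum (φ : Committee m k → ℝ) {ι : Type*} (s : Finset ι)
    (Md : ι → Multiset (Equiv.Perm (Fin m))) (U : Committee m k) :
    scoreM φ (∑ i ∈ s, Md i) U = ∑ i ∈ s, scoreM φ (Md i) U := by
  classical
  induction' s using Finset.induction with a s ha ih
  · simp [scoreM_zero]
  · rw [Finset.sum_insert ha, Finset.sum_insert ha, scoreM_add, ih]

variable (hkm : k < m) (hk : 1 ≤ k)

/-- the reference committee -/
noncomputable abbrev S0 : Committee m k := K0C (le_of_lt hkm)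

/-- sphere profile: all votes placing `S0` at position `α` -/
noncomputable def Sph (α : Committee m k) : Finset (Equiv.Perm (Fin m)) := by
  classical
  exact Finset.univ.filter (fun u => commPos u (S0 hkm) = α)

lemma Sph_nonempty (α : Committee m k) : (Sph hkm α).Nonempty := by
  classical
  obtain ⟨v, hv1, _⟩ := exists_perm_pair (S0 hkm).1 (S0 hkm).1 α.1 α.1
    (by rw [(S0 hkm).2, α.2]) (by rw [(S0 hkm).2, α.2]) (by simp [α.2, (S0 hkm).2])
  refine ⟨v, ?_⟩
  unfold Sph
  simp only [Finset.mem_filter, Finset.mem_univ, true_and]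
  exact Subtype.ext hv1

lemma mem_Sph {α : Committee m k} {u : Equiv.Perm (Fin m)} :
    u ∈ Sph hkm α ↔ commPos u (S0 hkm) = α := by
  unfold Sph
  simp

/-- the key symmetry: sphere scores only depend on the intersection with S0 -/
lemma sphere_sym (φ : Committee m k → ℝ) (α U U' : Committee m k)
    (h : (U.1 ∩ (S0 hkm).1).card = (U'.1 ∩ (S0 hkm).1).card) :
    scoreM φ (Sph hkm α).val U = scoreM φ (Sph hkm α).val U' := by
  classical
  obtain ⟨π, hπ1, hπ2⟩ := exists_perm_pair (S0 hkm).1 U'.1 (S0 hkm).1 U.1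
    (by rfl) (by rw [U'.2, U.2]) (by rw [Finset.inter_comm, ← h, Finset.inter_comm])
  have hπS : commPos π (S0 hkm) = S0 hkm := Subtype.ext hπ1
  have hπU : commPos π U' = U := Subtype.ext hπ2
  rw [scoreM_finset, scoreM_finset]
  apply Finset.sum_nbij' (fun u => u * π) (fun u => u * π⁻¹)
  · intro u hu
    rw [mem_Sph] at hu ⊢
    have : commPos (u * π) (S0 hkm) = commPos u (commPos π (S0 hkm)) := by
      rw [commPos_trans]; rfl
    rw [this, hπS, hu]
  · intro u hu
    rw [mem_Sph] at hu ⊢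
    have : commPos (u * π⁻¹) (S0 hkm) = commPos u (commPos π⁻¹ (S0 hkm)) := by
      rw [commPos_trans]; rfl
    rw [this]
    have hπS' : commPos π⁻¹ (S0 hkm) = S0 hkm := by
      have := congrArg (commPos π⁻¹) hπS
      rw [commPos_inv] at this
      exact this.symm
    rw [hπS', hu]
  · intro u _; group
  · intro u _; group
  · intro u _
    have : commPos (u * π) U' = commPos u (commPos π U') := by
      rw [commPos_trans]; rfl
    rw [this, hπU]

end Engine
end CSFaux
namespace CSFaux
open Finset

variable {m k : ℕ}

/-- explicit representative committee having intersection `d` with the top committee -/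
noncomputable def repC (hkm : k < m) (d : ℕ) : Committee m k :=
  if h : 2 * k ≤ m + d ∧ d ≤ k then
    ⟨Finset.attachFin (Finset.range d ∪ Finset.Ico k (2 * k - d))
      (by
        intro a ha
        rcases Finset.mem_union.mp ha with h' | h'
        · have := Finset.mem_range.mp h'; omega
        · have := Finset.mem_Ico.mp h'; omega),
     by
      have hdisj : Disjoint (Finset.range d) (Finset.Ico k (2 * k - d)) := by
        rw [Finset.disjoint_left]
        intro a ha hb
        have := Finset.mem_range.mp ha
        have := Finset.mem_Ico.mp hb
        omega
      rw [Finset.card_attachFin, Finset.card_union_of_disjoint hdisj,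
        Finset.card_range, Nat.card_Ico]
      omega⟩
  else S0 hkm

lemma repC_inter (hkm : k < m) (d : ℕ) (h1 : 2 * k ≤ m + d) (h2 : d ≤ k) :
    ((repC hkm d).1 ∩ (S0 hkm).1).card = d := by
  unfold repC
  rw [dif_pos ⟨h1, h2⟩]
  show (Finset.attachFin _ _ ∩ Finset.attachFin _ _).card = d
  rw [attachFin_inter, Finset.card_attachFin]
  have : (Finset.range d ∪ Finset.Ico k (2 * k - d)) ∩ Finset.range k = Finset.range d := by
    ext t
    simp only [Finset.mem_inter, Finset.mem_union, Finset.mem_range, Finset.mem_Ico]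
    omega
  rw [this, Finset.card_range]

lemma repC_zero (hkm : k < m) (hm2 : m = 2 * k) (hk : 1 ≤ k) :
    (repC hkm 0).1 = ((S0 hkm).1)ᶜ := by
  unfold repC
  rw [dif_pos ⟨by omega, by omega⟩]
  ext a
  show _ ∈ Finset.attachFin _ _ ↔ _
  rw [Finset.mem_attachFin, Finset.mem_compl]
  show _ ↔ a ∉ Finset.attachFin _ _
  rw [Finset.mem_attachFin]
  have ha := a.2
  simp only [Finset.mem_union, Finset.mem_range, Finset.mem_Ico]
  omega

/-- complement committee (in the case m = 2k) -/
noncomputable def complC (hm2 : m = 2 * k) (U : Committee m k) : Committee m k :=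
  ⟨U.1ᶜ, by rw [Finset.card_compl, U.2]; simp; omega⟩

lemma image_compl_equiv (u : Equiv.Perm (Fin m)) (A : Finset (Fin m)) :
    (Aᶜ).image u = (A.image u)ᶜ := by
  ext b
  constructor
  · intro hbc
    rw [Finset.mem_image] at hbc
    obtain ⟨a, ha, rfl⟩ := hbc
    rw [Finset.mem_compl] at ha ⊢
    intro hb
    rw [Finset.mem_image] at hb
    obtain ⟨a', ha', he⟩ := hb
    exact ha (u.injective he ▸ ha')
  · intro hb
    rw [Finset.mem_compl] at hb
    rw [Finset.mem_image]
    refine ⟨u.symm b, ?_, u.apply_symm_apply b⟩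
    rw [Finset.mem_compl]
    intro hc
    apply hb
    rw [Finset.mem_image]
    exact ⟨u.symm b, hc, u.apply_symm_apply b⟩

lemma commPos_complC (hm2 : m = 2 * k) (u : Equiv.Perm (Fin m)) (U : Committee m k) :
    commPos u (complC hm2 U) = complC hm2 (commPos u U) := by
  apply Subtype.ext
  show (U.1ᶜ).image u = ((U.1).image u)ᶜ
  exact image_compl_equiv u U.1

lemma repC_zero_eq_complC (hkm : k < m) (hm2 : m = 2 * k) (hk : 1 ≤ k) :
    repC hkm 0 = complC hm2 (S0 hkm) :=
  Subtype.ext (repC_zero hkm hm2 hk)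

lemma complC_S0_eq_Bot (hkm : k < m) (hm2 : m = 2 * k) :
    complC hm2 (S0 hkm) = BotC (le_of_lt hkm) := by
  apply Subtype.ext
  show ((S0 hkm).1)ᶜ = _
  ext a
  rw [Finset.mem_compl]
  unfold S0 K0C BotC
  rw [Finset.mem_attachFin, Finset.mem_attachFin]
  have := a.2
  simp only [Finset.mem_range, Finset.mem_Ico]
  omega

/-- a committee disjoint from S0 (when m = 2k) is its complement -/
lemma eq_complC_of_inter_zero (hkm : k < m) (hm2 : m = 2 * k) (z : Committee m k)
    (hz : (z.1 ∩ (S0 hkm).1).card = 0) : z = complC hm2 (S0 hkm) := by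
  apply Subtype.ext
  apply Finset.eq_of_subset_of_card_le
  · intro a haz
    show a ∈ _ᶜ
    rw [Finset.mem_compl]
    intro haS
    have : a ∈ z.1 ∩ (S0 hkm).1 := Finset.mem_inter.mpr ⟨haz, haS⟩
    rw [Finset.card_eq_zero.mp hz] at this
    simp at this
  · rw [z.2]
    exact le_of_eq (complC hm2 (S0 hkm)).2

/-- forcing equality from a sum attaining its lower bound -/
lemma sum_eq_force {F : Finset (Equiv.Perm (Fin m))} {φ : Equiv.Perm (Fin m) → ℝ} {c : ℝ}
    (hle : ∀ u ∈ F, c ≤ φ u) (hsum : ∑ u ∈ F, φ u ≤ F.card * c) :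
    ∀ u ∈ F, φ u = c := by
  by_contra hc
  push_neg at hc
  obtain ⟨u, hu, hne⟩ := hc
  have hlt : (F.card : ℝ) * c < ∑ u ∈ F, φ u := by
    have := Finset.sum_lt_sum (f := fun _ => c) (g := φ) hle ⟨u, hu, lt_of_le_of_ne (hle u hu) (Ne.symm hne)⟩
    rwa [Finset.sum_const, nsmul_eq_mul] at this
  linarith

end CSFaux
namespace CSFaux
open Finset

variable {m k : ℕ}

section Package

variable (hkm : k < m) (hk : 1 ≤ k) (f g : Committee m k → ℝ)

/-- score of a sphere component at S0 -/
lemma comp_S0 (α : Committee m k) (hα : f α = f (S0 hkm)) :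
    scoreM f (Sph hkm α).val (S0 hkm) = (Sph hkm α).card * f (S0 hkm) := by
  rw [scoreM_finset]
  have hc : ∀ u ∈ Sph hkm α, f (commPos u (S0 hkm)) = f (S0 hkm) := fun u hu => by
    rw [(mem_Sph hkm).mp hu, hα]
  rw [Finset.sum_congr rfl hc, Finset.sum_const, nsmul_eq_mul]

lemma comp_le (hfM : ∀ z, f z ≤ f (S0 hkm)) (α U : Committee m k) :
    scoreM f (Sph hkm α).val U ≤ (Sph hkm α).card * f (S0 hkm) := by
  rw [scoreM_finset]
  calc ∑ u ∈ Sph hkm α, f (commPos u U) ≤ ∑ _u ∈ Sph hkm α, f (S0 hkm) :=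
    Finset.sum_le_sum (fun u _ => hfM _)
  _ = (Sph hkm α).card * f (S0 hkm) := by rw [Finset.sum_const, nsmul_eq_mul]

lemma comp_lt (hfM : ∀ z, f z ≤ f (S0 hkm)) (α U : Committee m k)
    (u : Equiv.Perm (Fin m)) (hu : u ∈ Sph hkm α) (hlt : f (commPos u U) < f (S0 hkm)) :
    scoreM f (Sph hkm α).val U < (Sph hkm α).card * f (S0 hkm) := by
  rw [scoreM_finset]
  calc ∑ u ∈ Sph hkm α, f (commPos u U) < ∑ _u ∈ Sph hkm α, f (S0 hkm) :=
    Finset.sum_lt_sum (fun u _ => hfM _) ⟨u, hu, hlt⟩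
  _ = (Sph hkm α).card * f (S0 hkm) := by rw [Finset.sum_const, nsmul_eq_mul]

/-- witness vote for the gap -/
lemma gap_witness (α z T0 : Committee m k) (e : ℕ)
    (hαz : (α.1 ∩ z.1).card = e) (hT0 : (T0.1 ∩ (S0 hkm).1).card = e) :
    ∃ u ∈ Sph hkm α, commPos u T0 = z := by
  obtain ⟨v, hv1, hv2⟩ := exists_perm_pair (S0 hkm).1 T0.1 α.1 z.1
    (by rw [(S0 hkm).2, α.2]) (by rw [T0.2, z.2])
    (by rw [Finset.inter_comm, hT0, hαz])
  exact ⟨v, (mem_Sph hkm).mpr (Subtype.ext hv1), Subtype.ext hv2⟩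

lemma dU_mem_D (D : Finset ℕ) (hD : ∀ d, d ∈ D ↔ 2 * k ≤ m + d ∧ d + 1 ≤ k)
    (U : Committee m k) (hU : U ≠ S0 hkm) : (U.1 ∩ (S0 hkm).1).card ∈ D := by
  rw [hD]
  have h1 := card_inter_ge U (S0 hkm)
  have h2 := card_inter_le U (S0 hkm)
  refine ⟨h1, ?_⟩
  rcases Nat.lt_or_ge (U.1 ∩ (S0 hkm).1).card k with h | h
  · omega
  · exfalso
    have hik : (U.1 ∩ (S0 hkm).1).card = k := le_antisymm h2 h
    have hsub : U.1 ⊆ (S0 hkm).1 := by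
      have : U.1 ∩ (S0 hkm).1 = U.1 := by
        apply Finset.eq_of_subset_of_card_le Finset.inter_subset_left
        rw [hik, U.2]
      rw [← this]
      exact Finset.inter_subset_right
    exact hU (Subtype.ext (Finset.eq_of_subset_of_card_le hsub (by rw [U.2, (S0 hkm).2])))

lemma protector_package
    (hfM : ∀ z, f z ≤ f (S0 hkm)) (hgM : ∀ z, g z ≤ g (S0 hkm))
    (hA : ∀ x, f x = f (S0 hkm) ↔ g x = g (S0 hkm))
    (D : Finset ℕ) (hD : ∀ d, d ∈ D ↔ 2 * k ≤ m + d ∧ d + 1 ≤ k)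
    (alpha zd : ℕ → Committee m k)
    (hpr : ∀ d ∈ D, f (alpha d) = f (S0 hkm) ∧ f (zd d) ≠ f (S0 hkm)
        ∧ ((alpha d).1 ∩ (zd d).1).card = d)
    (Mr : ℕ) (as : Committee m k) (has : f as = f (S0 hkm))
    (e : ℕ) (heD : e ∈ D) (hcond : m + e = 2 * k → e = 0 → k = 1)
    (hmax : ∀ d ∈ D,
      scoreM f (Mr • (Sph hkm as).val + ∑ d' ∈ D, (Sph hkm (alpha d')).val) (repC hkm d)
      ≤ scoreM f (Mr • (Sph hkm as).val + ∑ d' ∈ D, (Sph hkm (alpha d')).val) (repC hkm e)) :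
    ∃ (Pi : Multiset (Equiv.Perm (Fin m))) (T0 : Committee m k) (e : ℕ),
      2 * k ≤ m + e ∧ e + 1 ≤ k ∧ (m + e = 2 * k → e = 0 → k = 1) ∧
      (T0.1 ∩ (S0 hkm).1).card = e ∧
      (∀ U, scoreM f Pi U ≤ scoreM f Pi (S0 hkm)) ∧
      (∀ U, U ≠ S0 hkm → scoreM f Pi U ≤ scoreM f Pi T0) ∧
      scoreM f Pi T0 < scoreM f Pi (S0 hkm) ∧
      scoreM g Pi T0 < scoreM g Pi (S0 hkm) := by
  classical
  set Pi : Multiset (Equiv.Perm (Fin m)) :=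
    Mr • (Sph hkm as).val + ∑ d' ∈ D, (Sph hkm (alpha d')).val with hPi
  have he1 : 2 * k ≤ m + e := ((hD e).mp heD).1
  have he2 : e + 1 ≤ k := ((hD e).mp heD).2
  set T0 : Committee m k := repC hkm e with hT0def
  have hT0 : (T0.1 ∩ (S0 hkm).1).card = e := repC_inter hkm e he1 (by omega)
  -- decomposition of scores
  have hdec : ∀ (φ : Committee m k → ℝ) (U : Committee m k),
      scoreM φ Pi U = Mr * scoreM φ (Sph hkm as).val U
        + ∑ d' ∈ D, scoreM φ (Sph hkm (alpha d')).val U := by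
    intro φ U
    rw [hPi, scoreM_add, scoreM_nsmul, scoreM_sum]
  -- symmetry for Pi
  have hsym : ∀ (φ : Committee m k → ℝ) (U U' : Committee m k),
      (U.1 ∩ (S0 hkm).1).card = (U'.1 ∩ (S0 hkm).1).card →
      scoreM φ Pi U = scoreM φ Pi U' := by
    intro φ U U' h
    rw [hdec, hdec]
    congr 1
    · rw [sphere_sym hkm φ as U U' h]
    · exact Finset.sum_congr rfl (fun d _ => sphere_sym hkm φ _ U U' h)
  -- score of S0
  have hS0f : scoreM f Pi (S0 hkm) = Mr * ((Sph hkm as).card * f (S0 hkm))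
      + ∑ d' ∈ D, ((Sph hkm (alpha d')).card * f (S0 hkm)) := by
    rw [hdec, comp_S0 hkm f as has]
    congr 1
    exact Finset.sum_congr rfl (fun d hd => comp_S0 hkm f _ (hpr d hd).1)
  have hS0g : scoreM g Pi (S0 hkm) = Mr * ((Sph hkm as).card * g (S0 hkm))
      + ∑ d' ∈ D, ((Sph hkm (alpha d')).card * g (S0 hkm)) := by
    rw [hdec, comp_S0 hkm g as ((hA as).mp has)]
    congr 1
    exact Finset.sum_congr rfl (fun d hd => comp_S0 hkm g _ ((hA _).mp (hpr d hd).1))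
  -- P1
  have hP1 : ∀ U, scoreM f Pi U ≤ scoreM f Pi (S0 hkm) := by
    intro U
    rw [hdec, hS0f]
    apply add_le_add
    · exact mul_le_mul_of_nonneg_left (comp_le hkm f hfM as U) (Nat.cast_nonneg Mr)
    · exact Finset.sum_le_sum (fun d _ => comp_le hkm f hfM _ U)
  -- P2
  have hP2 : ∀ U, U ≠ S0 hkm → scoreM f Pi U ≤ scoreM f Pi T0 := by
    intro U hU
    have hdUD := dU_mem_D hkm D hD U hU
    have h1 : scoreM f Pi U = scoreM f Pi (repC hkm ((U.1 ∩ (S0 hkm).1).card)) := by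
      apply hsym
      rw [repC_inter hkm _ ((hD _).mp hdUD).1 (by have := ((hD _).mp hdUD).2; omega)]
    rw [h1]
    exact hmax _ hdUD
  -- gap witness
  obtain ⟨u, huSph, huT0⟩ := gap_witness hkm (alpha e) (zd e) T0 e (hpr e heD).2.2 hT0
  -- P3
  have hP3 : scoreM f Pi T0 < scoreM f Pi (S0 hkm) := by
    rw [hdec, hS0f]
    apply add_lt_add_of_le_of_lt
    · exact mul_le_mul_of_nonneg_left (comp_le hkm f hfM as T0) (Nat.cast_nonneg Mr)
    · apply Finset.sum_lt_sum (fun d _ => comp_le hkm f hfM _ T0)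
      refine ⟨e, heD, ?_⟩
      apply comp_lt hkm f hfM _ T0 u huSph
      rw [huT0]
      exact lt_of_le_of_ne (hfM _) (hpr e heD).2.1
  -- P4
  have hP4 : scoreM g Pi T0 < scoreM g Pi (S0 hkm) := by
    rw [hdec, hS0g]
    apply add_lt_add_of_le_of_lt
    · exact mul_le_mul_of_nonneg_left (comp_le hkm g hgM as T0) (Nat.cast_nonneg Mr)
    · apply Finset.sum_lt_sum (fun d _ => comp_le hkm g hgM _ T0)
      refine ⟨e, heD, ?_⟩
      apply comp_lt hkm g hgM _ T0 u huSph
      rw [huT0]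
      apply lt_of_le_of_ne (hgM _)
      intro hc
      exact (hpr e heD).2.1 ((hA _).mpr hc)
  exact ⟨Pi, T0, e, he1, he2, hcond, hT0, hP1, hP2, hP3, hP4⟩

end Package
end CSFaux
namespace CSFaux
open Finset

variable {m k : ℕ}

lemma protector_exists (hkm : k < m) (hk : 1 ≤ k) (f g : Committee m k → ℝ)
    (hfM : ∀ z, f z ≤ f (S0 hkm)) (hf0 : ∀ z, 0 ≤ f z)
    (hfB : ∀ z, f (BotC (le_of_lt hkm)) ≤ f z)
    (hgM : ∀ z, g z ≤ g (S0 hkm))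
    (hA : ∀ x, f x = f (S0 hkm) ↔ g x = g (S0 hkm))
    (hnc : f (BotC (le_of_lt hkm)) ≠ f (S0 hkm)) :
    ∃ (Pi : Multiset (Equiv.Perm (Fin m))) (T0 : Committee m k) (e : ℕ),
      2 * k ≤ m + e ∧ e + 1 ≤ k ∧ (m + e = 2 * k → e = 0 → k = 1) ∧
      (T0.1 ∩ (S0 hkm).1).card = e ∧
      (∀ U, scoreM f Pi U ≤ scoreM f Pi (S0 hkm)) ∧
      (∀ U, U ≠ S0 hkm → scoreM f Pi U ≤ scoreM f Pi T0) ∧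
      scoreM f Pi T0 < scoreM f Pi (S0 hkm) ∧
      scoreM g Pi T0 < scoreM g Pi (S0 hkm) := by
  classical
  set D : Finset ℕ := Finset.Icc (2 * k - m) (k - 1) with hDdef
  have hD : ∀ d, d ∈ D ↔ 2 * k ≤ m + d ∧ d + 1 ≤ k := by
    intro d; rw [hDdef, Finset.mem_Icc]; omega
  have hfront : ∀ d ∈ D, ∃ p : Committee m k × Committee m k,
      f p.1 = f (S0 hkm) ∧ f p.2 ≠ f (S0 hkm) ∧ (p.1.1 ∩ p.2.1).card = d := by
    intro d hd
    have hpath := path_K0_Bot hk hkm d ((hD d).mp hd).1 ((hD d).mp hd).2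
    obtain ⟨a, b, hr, hPa, hPb⟩ := frontier_of_path (P := fun x => f x = f (S0 hkm))
      hpath rfl hnc
    exact ⟨(a, b), hPa, hPb, hr⟩
  set pr : ℕ → Committee m k × Committee m k :=
    fun d => if h : d ∈ D then Classical.choose (hfront d h) else (S0 hkm, S0 hkm) with hprdef
  set alpha : ℕ → Committee m k := fun d => (pr d).1 with halphadef
  set zd : ℕ → Committee m k := fun d => (pr d).2 with hzddef
  have hpr : ∀ d ∈ D, f (alpha d) = f (S0 hkm) ∧ f (zd d) ≠ f (S0 hkm)
      ∧ ((alpha d).1 ∩ (zd d).1).card = d := by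
    intro d hd
    have : pr d = Classical.choose (hfront d hd) := by rw [hprdef]; exact dif_pos hd
    rw [halphadef, hzddef]
    simp only
    rw [this]
    exact Classical.choose_spec (hfront d hd)
  set Pi0 : Multiset (Equiv.Perm (Fin m)) := ∑ d' ∈ D, (Sph hkm (alpha d')).val with hPi0def
  have hDne : D.Nonempty := ⟨k - 1, (hD _).mpr (by omega)⟩
  obtain ⟨e0, he0D, he0max⟩ := Finset.exists_max_image D
    (fun d => scoreM f Pi0 (repC hkm d)) hDne
  have hzero : ∀ U, scoreM f ((0 : ℕ) • (Sph hkm (S0 hkm)).val + Pi0) U = scoreM f Pi0 U := by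
    intro U
    rw [zero_nsmul, zero_add]
  by_cases hgood : m + e0 = 2 * k → e0 = 0 → k = 1
  · apply protector_package hkm f g hfM hgM hA D hD alpha zd hpr 0 (S0 hkm) rfl e0 he0D hgood
    intro d hd
    rw [hzero, hzero]
    exact he0max d hd
  · push_neg at hgood
    obtain ⟨hm2', he00, hk1⟩ := hgood
    have hm2 : m = 2 * k := by omega
    have hk2 : 2 ≤ k := by omega
    have h1D : 1 ∈ D := (hD 1).mpr (by omega)
    have h0r1 : 2 * k ≤ m + 0 := by omega
    by_cases hii : ∃ (α : Committee m k) (e' : ℕ), f α = f (S0 hkm) ∧ e' ∈ D ∧ 1 ≤ e' ∧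
        scoreM f (Sph hkm α).val (repC hkm 0) < scoreM f (Sph hkm α).val (repC hkm e')
    · obtain ⟨as, es, hfas, hesD, _, hgap⟩ := hii
      set Sas : ℕ → ℝ := fun d => scoreM f (Sph hkm as).val (repC hkm d) with hSasdef
      have hgap' : (0 : ℝ) < Sas es - Sas 0 := by
        rw [hSasdef]; simp only; linarith
      obtain ⟨Mr, hMr⟩ := exists_nat_gt (scoreM f Pi0 (repC hkm 0) / (Sas es - Sas 0))
      have hMrgap : scoreM f Pi0 (repC hkm 0) < Mr * (Sas es - Sas 0) := by
        rw [div_lt_iff₀ hgap'] at hMr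
        linarith
      have hexp : ∀ d : ℕ,
          scoreM f (Mr • (Sph hkm as).val + Pi0) (repC hkm d)
            = Mr * Sas d + scoreM f Pi0 (repC hkm d) := by
        intro d
        rw [scoreM_add, scoreM_nsmul]
      obtain ⟨e1, he1D, he1max⟩ := Finset.exists_max_image D
        (fun d => scoreM f (Mr • (Sph hkm as).val + Pi0) (repC hkm d)) hDne
      have he1ne : e1 ≠ 0 := by
        intro h0
        have hcmp := he1max es hesD
        rw [h0] at hcmp
        rw [hexp, hexp] at hcmp
        have hnn : 0 ≤ scoreM f Pi0 (repC hkm es) := scoreM_nonneg f hf0 _ _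
        nlinarith
      exact protector_package hkm f g hfM hgM hA D hD alpha zd hpr Mr as hfas e1 he1D
        (fun _ h2 => absurd h2 he1ne) (fun d hd => he1max d hd)
    · -- case (ii): f is constant off S0
      push_neg at hii
      have hmaster : ∀ z : Committee m k, z ≠ S0 hkm → f z = f (BotC (le_of_lt hkm)) := by
        intro z hz
        set dz := (z.1 ∩ (S0 hkm).1).card with hdzdef
        have hdzD : dz ∈ D := dU_mem_D hkm D hD z hz
        have hS00 : ∀ u ∈ Sph hkm (S0 hkm),
            f (commPos u (repC hkm 0)) = f (BotC (le_of_lt hkm)) := by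
          intro u hu
          rw [repC_zero_eq_complC hkm hm2 hk, commPos_complC, (mem_Sph hkm).mp hu,
            complC_S0_eq_Bot hkm hm2]
        have hS0z : scoreM f (Sph hkm (S0 hkm)).val (repC hkm 0)
            = (Sph hkm (S0 hkm)).card * f (BotC (le_of_lt hkm)) := by
          rw [scoreM_finset, Finset.sum_congr rfl hS00, Finset.sum_const, nsmul_eq_mul]
        rcases Nat.eq_zero_or_pos dz with hdz0 | hdzpos
        · have := eq_complC_of_inter_zero hkm hm2 z (by rw [← hdzdef]; exact hdz0)
          rw [this, complC_S0_eq_Bot hkm hm2]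
        · have hle := hii (S0 hkm) dz rfl hdzD hdzpos
          rw [hS0z] at hle
          have hforce := sum_eq_force (F := Sph hkm (S0 hkm))
            (φ := fun u => f (commPos u (repC hkm dz)))
            (c := f (BotC (le_of_lt hkm)))
            (fun u _ => hfB _) (by rw [← scoreM_finset]; exact hle)
          obtain ⟨u, hu1, hu2⟩ := gap_witness hkm (S0 hkm) z (repC hkm dz) dz
            (by rw [Finset.inter_comm]; try exact hdzdef.symm)
            (repC_inter hkm dz ((hD dz).mp hdzD).1 (by have := ((hD dz).mp hdzD).2; omega))
          have h3 : f (commPos u (repC hkm dz)) = f (BotC (le_of_lt hkm)) := hforce u hu1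
          rw [hu2] at h3
          exact h3
      -- all hval0 values coincide; use e = 1
      apply protector_package hkm f g hfM hgM hA D hD alpha zd hpr 0 (S0 hkm) rfl 1 h1D
        (fun _ h2 => absurd h2 one_ne_zero)
      intro d hd
      rw [hzero, hzero]
      have hstep1 : scoreM f Pi0 (repC hkm d) ≤ scoreM f Pi0 (repC hkm e0) := he0max d hd
      have hstep2 : scoreM f Pi0 (repC hkm e0) ≤ scoreM f Pi0 (repC hkm 1) := by
        rw [he00]
        -- score at repC 0 equals the all-bottom value, which is a lower bound for score at repC 1
        have hcomp0 : ∀ d' ∈ D, scoreM f (Sph hkm (alpha d')).val (repC hkm 0)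
            = (Sph hkm (alpha d')).card * f (BotC (le_of_lt hkm)) := by
          intro d' hd'
          have hterm : ∀ u ∈ Sph hkm (alpha d'),
              f (commPos u (repC hkm 0)) = f (BotC (le_of_lt hkm)) := by
            intro u hu
            rw [repC_zero_eq_complC hkm hm2 hk, commPos_complC, (mem_Sph hkm).mp hu]
            apply hmaster
            intro hc
            have hinv : ∀ x : Committee m k, complC hm2 (complC hm2 x) = x := by
              intro x; apply Subtype.ext; simp [complC]
            have h5 := congrArg (complC hm2) hc
            rw [hinv] at h5
            have h6 := (hpr d' hd').1
            rw [h5, complC_S0_eq_Bot hkm hm2] at h6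
            exact absurd h6 hnc
          rw [scoreM_finset, Finset.sum_congr rfl hterm, Finset.sum_const, nsmul_eq_mul]
        have hcomp1 : ∀ d' ∈ D, (Sph hkm (alpha d')).card * f (BotC (le_of_lt hkm))
            ≤ scoreM f (Sph hkm (alpha d')).val (repC hkm 1) := by
          intro d' hd'
          rw [scoreM_finset]
          calc ((Sph hkm (alpha d')).card : ℝ) * f (BotC (le_of_lt hkm))
              = ∑ _u ∈ Sph hkm (alpha d'), f (BotC (le_of_lt hkm)) := by
                rw [Finset.sum_const, nsmul_eq_mul]
          _ ≤ _ := Finset.sum_le_sum (fun u _ => hfB _)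
        rw [hPi0def, scoreM_sum, scoreM_sum]
        calc ∑ d' ∈ D, scoreM f (Sph hkm (alpha d')).val (repC hkm 0)
            = ∑ d' ∈ D, ((Sph hkm (alpha d')).card : ℝ) * f (BotC (le_of_lt hkm)) :=
              Finset.sum_congr rfl hcomp0
        _ ≤ _ := Finset.sum_le_sum hcomp1
      linarith

end CSFaux
namespace CSFaux
open Finset

variable {m k : ℕ}

lemma rat_scale_lt (q : ℚ) (hq : 0 < q) (x y : ℝ) (h : y < (q : ℝ) * x) :
    (q.den : ℝ) * y < (q.num.toNat : ℝ) * x := by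
  have hden : (0 : ℝ) < (q.den : ℝ) := by exact_mod_cast q.den_pos
  have hnum : ((q.num.toNat : ℕ) : ℝ) = ((q.num : ℤ) : ℝ) := by
    have := Int.toNat_of_nonneg (le_of_lt (Rat.num_pos.mpr hq))
    exact_mod_cast congrArg (fun z : ℤ => (z : ℝ)) this
  have hcast : (q : ℝ) = ((q.num : ℤ) : ℝ) / ((q.den : ℕ) : ℝ) := Rat.cast_def q
  have h2 : (q.den : ℝ) * y < (q.den : ℝ) * ((q : ℝ) * x) := (mul_lt_mul_iff_right₀ hden).mpr h
  have h3 : (q.den : ℝ) * ((q : ℝ) * x) = ((q.num : ℤ) : ℝ) * x := by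
    rw [hcast]
    field_simp
  rw [hnum, ← h3]
  exact h2

lemma rat_scale_lt' (q : ℚ) (hq : 0 < q) (x y : ℝ) (h : (q : ℝ) * x < y) :
    (q.num.toNat : ℝ) * x < (q.den : ℝ) * y := by
  have hden : (0 : ℝ) < (q.den : ℝ) := by exact_mod_cast q.den_pos
  have hnum : ((q.num.toNat : ℕ) : ℝ) = ((q.num : ℤ) : ℝ) := by
    have := Int.toNat_of_nonneg (le_of_lt (Rat.num_pos.mpr hq))
    exact_mod_cast congrArg (fun z : ℤ => (z : ℝ)) this
  have hcast : (q : ℝ) = ((q.num : ℤ) : ℝ) / ((q.den : ℕ) : ℝ) := Rat.cast_def q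
  have h2 : (q.den : ℝ) * ((q : ℝ) * x) < (q.den : ℝ) * y := (mul_lt_mul_iff_right₀ hden).mpr h
  have h3 : (q.den : ℝ) * ((q : ℝ) * x) = ((q.num : ℤ) : ℝ) * x := by
    rw [hcast]
    field_simp
  rw [hnum, ← h3]
  exact h2

lemma extraction (f g : Committee m k → ℝ)
    (hWM : ∀ (M : Multiset (Equiv.Perm (Fin m))) (S : Committee m k),
      (∀ T, scoreM f M T ≤ scoreM f M S) ↔ (∀ T, scoreM g M T ≤ scoreM g M S))
    (Ma Mb : Multiset (Equiv.Perm (Fin m))) (S T : Committee m k)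
    (hcov : ∀ (a b : ℕ) (U : Committee m k),
      scoreM f (a • Ma + b • Mb) U
        ≤ max (scoreM f (a • Ma + b • Mb) S) (scoreM f (a • Ma + b • Mb) T))
    (hP : 0 < scoreM f Ma S - scoreM f Ma T)
    (hQ : 0 < scoreM f Mb T - scoreM f Mb S) :
    (scoreM f Mb T - scoreM f Mb S) * (scoreM g Ma S - scoreM g Ma T)
      = (scoreM f Ma S - scoreM f Ma T) * (scoreM g Mb T - scoreM g Mb S) := by
  classical
  set P : ℝ := scoreM f Ma S - scoreM f Ma T with hPdef
  set Q : ℝ := scoreM f Mb T - scoreM f Mb S with hQdef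
  set P' : ℝ := scoreM g Ma S - scoreM g Ma T with hP'def
  set Q' : ℝ := scoreM g Mb T - scoreM g Mb S with hQ'def
  have hexp : ∀ (φ : Committee m k → ℝ) (a b : ℕ) (U : Committee m k),
      scoreM φ (a • Ma + b • Mb) U = a * scoreM φ Ma U + b * scoreM φ Mb U := by
    intro φ a b U
    rw [scoreM_add, scoreM_nsmul, scoreM_nsmul]
  have key : ∀ a b : ℕ,
      ((b : ℝ) * Q ≤ a * P ∧ (b : ℝ) * Q' ≤ a * P')
        ∨ ((a : ℝ) * P ≤ b * Q ∧ (a : ℝ) * P' ≤ b * Q') := by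
    intro a b
    set E := a • Ma + b • Mb with hE
    rcases le_total (scoreM f E T) (scoreM f E S) with hc | hc
    · left
      have hSwin : ∀ U, scoreM f E U ≤ scoreM f E S := by
        intro U
        calc scoreM f E U ≤ max (scoreM f E S) (scoreM f E T) := hcov a b U
        _ = scoreM f E S := max_eq_left hc
      have hgwin := (hWM E S).mp hSwin
      have h1 : scoreM f E T ≤ scoreM f E S := hc
      have h2 : scoreM g E T ≤ scoreM g E S := hgwin T
      rw [hexp, hexp] at h1 h2
      constructor
      · rw [hPdef, hQdef]; linarith
      · rw [hP'def, hQ'def]; linarith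
    · right
      have hTwin : ∀ U, scoreM f E U ≤ scoreM f E T := by
        intro U
        calc scoreM f E U ≤ max (scoreM f E S) (scoreM f E T) := hcov a b U
        _ = scoreM f E T := max_eq_right hc
      have hgwin := (hWM E T).mp hTwin
      have h1 : scoreM f E S ≤ scoreM f E T := hc
      have h2 : scoreM g E S ≤ scoreM g E T := hgwin S
      rw [hexp, hexp] at h1 h2
      constructor
      · rw [hPdef, hQdef]; linarith
      · rw [hP'def, hQ'def]; linarith
  have hP'0 : 0 ≤ P' := by
    rcases key 1 0 with ⟨_, h⟩ | ⟨h, _⟩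
    · simpa using h
    · simp at h
      linarith
  have hQ'0 : 0 ≤ Q' := by
    rcases key 0 1 with ⟨h, _⟩ | ⟨_, h⟩
    · simp at h
      linarith
    · simpa using h
  show Q * P' = P * Q'
  rcases eq_or_lt_of_le hP'0 with hP'eq | hP'pos
  · -- P' = 0 : show Q' = 0
    obtain ⟨a, ha⟩ := exists_nat_gt (Q / P)
    have haP : Q < a * P := by
      rw [div_lt_iff₀ hP] at ha
      linarith
    have hQ'z : Q' = 0 := by
      rcases key a 1 with ⟨_, h⟩ | ⟨h, _⟩
      · simp only [Nat.cast_one, one_mul] at h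
        rw [← hP'eq] at h
        simp at h
        linarith
      · simp only [Nat.cast_one, one_mul] at h
        linarith
    rw [← hP'eq, hQ'z]
    ring
  · rcases lt_trichotomy (Q * P') (P * Q') with hlt | heq | hgt
    · exfalso
      have h1 : Q / P < Q' / P' := by
        rw [div_lt_div_iff₀ hP hP'pos]
        linarith
      obtain ⟨q, hq1, hq2⟩ := exists_rat_btwn h1
      have hq0 : (0 : ℚ) < q := by
        have : (0 : ℝ) < (q : ℝ) := lt_of_le_of_lt (by positivity) hq1
        exact_mod_cast this
      have ha1 : Q < (q : ℝ) * P := by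
        rw [div_lt_iff₀ hP] at hq1
        linarith
      have ha2 : (q : ℝ) * P' < Q' := by
        rw [lt_div_iff₀ hP'pos] at hq2
        linarith
      have hb1 := rat_scale_lt q hq0 P Q ha1
      have hb2 := rat_scale_lt' q hq0 P' Q' ha2
      rcases key q.num.toNat q.den with ⟨_, h⟩ | ⟨h, _⟩
      · linarith
      · linarith
    · exact heq
    · exfalso
      have h1 : Q' / P' < Q / P := by
        rw [div_lt_div_iff₀ hP'pos hP]
        linarith
      obtain ⟨q, hq1, hq2⟩ := exists_rat_btwn h1
      have hq0 : (0 : ℚ) < q := by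
        have hQP' : 0 ≤ Q' / P' := by positivity
        have : (0 : ℝ) < (q : ℝ) := lt_of_le_of_lt hQP' hq1
        exact_mod_cast this
      have ha1 : (q : ℝ) * P < Q := by
        rw [lt_div_iff₀ hP] at hq2
        linarith
      have ha2 : Q' < (q : ℝ) * P' := by
        rw [div_lt_iff₀ hP'pos] at hq1
        linarith
      have hb1 := rat_scale_lt' q hq0 P Q ha1
      have hb2 := rat_scale_lt q hq0 P' Q' ha2
      rcases key q.num.toNat q.den with ⟨_, h⟩ | ⟨h, _⟩
      · linarith
      · linarith

end CSFaux
namespace CSFaux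
open Finset

variable {m k : ℕ}

set_option maxHeartbeats 2000000 in
lemma affine_of_nonconst (hkm : k < m) (hk : 1 ≤ k) (f g : Committee m k → ℝ)
    (hf : IsCSF f) (hg : IsCSF g)
    (hWM : ∀ (M : Multiset (Equiv.Perm (Fin m))) (S : Committee m k),
      (∀ T, scoreM f M T ≤ scoreM f M S) ↔ (∀ T, scoreM g M T ≤ scoreM g M S))
    (hnc : ∃ x y : Committee m k, f x ≠ f y) : AffEquiv f g := by
  classical
  have hfM : ∀ z, f z ≤ f (S0 hkm) := fun z => hf.mono _ _ (dominates_top (le_of_lt hkm) z)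
  have hgM : ∀ z, g z ≤ g (S0 hkm) := fun z => hg.mono _ _ (dominates_top (le_of_lt hkm) z)
  have hfB : ∀ z, f (BotC (le_of_lt hkm)) ≤ f z :=
    fun z => hf.mono _ _ (dominates_bot (le_of_lt hkm) z)
  have hgB : ∀ z, g (BotC (le_of_lt hkm)) ≤ g z :=
    fun z => hg.mono _ _ (dominates_bot (le_of_lt hkm) z)
  have hone : ∀ x : Committee m k, (∀ T, f T ≤ f x) ↔ (∀ T, g T ≤ g x) := by
    intro x
    have := hWM {(1 : Equiv.Perm (Fin m))} x
    constructor
    · intro h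
      intro T
      have h2 := (this.mp (fun T' => by
        rw [scoreM_singleton, scoreM_singleton, commPos_one, commPos_one]; exact h T')) T
      rwa [scoreM_singleton, scoreM_singleton, commPos_one, commPos_one] at h2
    · intro h
      intro T
      have h2 := (this.mpr (fun T' => by
        rw [scoreM_singleton, scoreM_singleton, commPos_one, commPos_one]; exact h T')) T
      rwa [scoreM_singleton, scoreM_singleton, commPos_one, commPos_one] at h2
  have hA : ∀ x, f x = f (S0 hkm) ↔ g x = g (S0 hkm) := by
    intro x
    constructor
    · intro h
      apply le_antisymm (hgM x)
      exact ((hone x).mp (fun T => le_trans (hfM T) (le_of_eq h.symm))) (S0 hkm)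
    · intro h
      apply le_antisymm (hfM x)
      exact ((hone x).mpr (fun T => le_trans (hgM T) (le_of_eq h.symm))) (S0 hkm)
  have hncB : f (BotC (le_of_lt hkm)) ≠ f (S0 hkm) := by
    intro hc
    obtain ⟨x, y, hxy⟩ := hnc
    apply hxy
    have h1 : ∀ z, f z = f (S0 hkm) := fun z =>
      le_antisymm (hfM z) (le_trans (le_of_eq hc.symm) (hfB z))
    rw [h1 x, h1 y]
  obtain ⟨Pi, T0, e, he1, he2, hcond, hT0, hP1, hP2, hP3, hP4⟩ :=
    protector_exists hkm hk f g hfM hf.nonneg hfB hgM hA hncB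
  set P : ℝ := scoreM f Pi (S0 hkm) - scoreM f Pi T0 with hPdef
  set P' : ℝ := scoreM g Pi (S0 hkm) - scoreM g Pi T0 with hP'def
  have hPpos : 0 < P := by rw [hPdef]; linarith
  have hP'pos : 0 < P' := by rw [hP'def]; linarith
  obtain ⟨c, hcgt⟩ := exists_nat_gt (f (S0 hkm) / P)
  have hcP : f (S0 hkm) < c * P := by
    rw [div_lt_iff₀ hPpos] at hcgt
    linarith
  -- the swap permutation
  obtain ⟨ψ, hψ1, hψ2⟩ := exists_perm_pair T0.1 (S0 hkm).1 (S0 hkm).1 T0.1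
    (by rw [T0.2, (S0 hkm).2]) (by rw [T0.2, (S0 hkm).2])
    (by rw [Finset.inter_comm])
  have hψT0 : commPos ψ T0 = S0 hkm := Subtype.ext hψ1
  have hψS0 : commPos ψ (S0 hkm) = T0 := Subtype.ext hψ2
  set PiT : Multiset (Equiv.Perm (Fin m)) := Pi.map (fun u => ψ.trans u) with hPiTdef
  have hPiT : ∀ (φ : Committee m k → ℝ) (U : Committee m k),
      scoreM φ PiT U = scoreM φ Pi (commPos ψ U) := by
    intro φ U
    rw [hPiTdef, scoreM_map_trans]
  -- main edge equation
  have hedge : ∀ x y : Committee m k, (x.1 ∩ y.1).card = e →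
      P' * (f x - f y) = P * (g x - g y) := by
    intro x y hxy
    obtain ⟨w, hw1, hw2⟩ := exists_perm_pair T0.1 (S0 hkm).1 x.1 y.1
      (by rw [T0.2, x.2]) (by rw [(S0 hkm).2, y.2])
      (by rw [hT0, hxy])
    have hwT0 : commPos w T0 = x := Subtype.ext hw1
    have hwS0 : commPos w (S0 hkm) = y := Subtype.ext hw2
    set Mb : Multiset (Equiv.Perm (Fin m)) := c • PiT + {w} with hMbdef
    have hMb : ∀ (φ : Committee m k → ℝ) (U : Committee m k),
        scoreM φ Mb U = c * scoreM φ Pi (commPos ψ U) + φ (commPos w U) := by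
      intro φ U
      rw [hMbdef, scoreM_add, scoreM_nsmul, hPiT, scoreM_singleton]
    have hQval : scoreM f Mb T0 - scoreM f Mb (S0 hkm) = c * P + (f x - f y) := by
      rw [hMb, hMb, hψT0, hψS0, hwT0, hwS0, hPdef]
      ring
    have hQ'val : scoreM g Mb T0 - scoreM g Mb (S0 hkm) = c * P' + (g x - g y) := by
      rw [hMb, hMb, hψT0, hψS0, hwT0, hwS0, hP'def]
      ring
    have hQpos : 0 < scoreM f Mb T0 - scoreM f Mb (S0 hkm) := by
      rw [hQval]
      have h1 : 0 ≤ f x := hf.nonneg x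
      have h2 : f y ≤ f (S0 hkm) := hfM y
      linarith
    -- coverage
    have hcov : ∀ (a b : ℕ) (U : Committee m k),
        scoreM f (a • Pi + b • Mb) U
          ≤ max (scoreM f (a • Pi + b • Mb) (S0 hkm)) (scoreM f (a • Pi + b • Mb) T0) := by
      intro a b U
      have hexp : ∀ V : Committee m k, scoreM f (a • Pi + b • Mb) V
          = a * scoreM f Pi V + b * (c * scoreM f Pi (commPos ψ V) + f (commPos w V)) := by
        intro V
        rw [scoreM_add, scoreM_nsmul, scoreM_nsmul, hMb]
      by_cases hU : U = S0 hkm ∨ U = T0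
      · rcases hU with h | h
        · rw [h]; exact le_max_left _ _
        · rw [h]; exact le_max_right _ _
      · push_neg at hU
        obtain ⟨hU1, hU2⟩ := hU
        rcases Nat.eq_zero_or_pos b with hb0 | hbpos
        · apply le_max_of_le_left
          rw [hexp, hexp, hb0]
          push_cast
          have h6 := hP1 U
          have ha0 : (0 : ℝ) ≤ (a : ℝ) := Nat.cast_nonneg a
          nlinarith
        · apply le_max_of_le_right
          rw [hexp, hexp, hψT0]
          have h1 : scoreM f Pi U ≤ scoreM f Pi T0 := hP2 U hU1
          have h2 : commPos ψ U ≠ S0 hkm := by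
            intro hc'
            rw [← hψT0] at hc'
            exact hU2 (commPos_inj ψ hc')
          have h3 : scoreM f Pi (commPos ψ U) ≤ scoreM f Pi T0 := hP2 _ h2
          have h4 : f (commPos w U) ≤ f (S0 hkm) := hfM _
          have h5 : 0 ≤ f (commPos w T0) := hf.nonneg _
          have hb1 : (1 : ℝ) ≤ (b : ℝ) := by exact_mod_cast hbpos
          have ha0 : (0 : ℝ) ≤ (a : ℝ) := Nat.cast_nonneg a
          -- T0 minus U
          rw [hwT0]
          have hPT : scoreM f Pi T0 ≤ scoreM f Pi (S0 hkm) - P + P := by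
            rw [hPdef]; ring_nf; linarith [hP3]
          have hstep : c * scoreM f Pi (commPos ψ U) + f (commPos w U)
              ≤ c * (scoreM f Pi (S0 hkm) - P) + f (S0 hkm) := by
            have : scoreM f Pi (commPos ψ U) ≤ scoreM f Pi (S0 hkm) - P := by
              rw [hPdef]; linarith
            have hc0 : (0 : ℝ) ≤ (c : ℝ) := Nat.cast_nonneg c
            nlinarith
          have hT0side : c * (scoreM f Pi (S0 hkm) - P) + f (S0 hkm)
              ≤ c * scoreM f Pi (S0 hkm) + f x - (c * P - f (S0 hkm)) := by
            have h0x : 0 ≤ f x := hf.nonneg x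
            ring_nf
            linarith
          nlinarith [hcP]
    have hext := extraction f g hWM Pi Mb (S0 hkm) T0 hcov (by rw [← hPdef]; exact hPpos) hQpos
    rw [hQval, hQ'val, ← hPdef, ← hP'def] at hext
    nlinarith [hext]
  -- telescoping along the connected e-graph
  have htel : ∀ x y : Committee m k, P' * (f x - f y) = P * (g x - g y) := by
    intro x y
    have hconn := estep_conn e he1 he2 hcond hk x y
    induction hconn with
    | refl => ring
    | tail hab hbc ih =>
        have := hedge _ _ hbc
        linarith
  refine ⟨P / P', f (S0 hkm) - (P / P') * g (S0 hkm), div_pos hPpos hP'pos, ?_⟩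
  intro S
  have := htel S (S0 hkm)
  have hP'ne : P' ≠ 0 := ne_of_gt hP'pos
  field_simp
  nlinarith [this]
end CSFaux
namespace CSFaux
open Finset

lemma committee_subsingleton {m k : ℕ} (h : k = 0 ∨ k = m) (S T : Committee m k) : S = T := by
  apply Subtype.ext
  rcases h with h | h
  · have hS : S.1.card = 0 := by rw [S.2, h]
    have hT : T.1.card = 0 := by rw [T.2, h]
    rw [Finset.card_eq_zero.mp hS, Finset.card_eq_zero.mp hT]
  · rw [Finset.eq_univ_of_card S.1 (by rw [S.2, h]; simp),
      Finset.eq_univ_of_card T.1 (by rw [T.2, h]; simp)]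

end CSFaux

theorem scoring_functions_unique_up_to_affine'
    (f g : ∀ m k, Committee m k → ℝ)
    (hf : ∀ m k, IsCSF (f m k)) (hg : ∀ m k, IsCSF (g m k))
    (hsame : SameRule f g) :
    ∀ m k, k ≤ m → AffEquiv (f m k) (g m k) := by
  classical
  intro m k hkm
  obtain ⟨t, _, ht⟩ := Finset.exists_subset_card_eq
    (show k ≤ (Finset.univ : Finset (Fin m)).card by simpa using hkm)
  set X0 : Committee m k := ⟨t, ht⟩
  have hWM : ∀ (M : Multiset (Equiv.Perm (Fin m))) (S : Committee m k),
      (∀ T, CSFaux.scoreM (f m k) M T ≤ CSFaux.scoreM (f m k) M S)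
        ↔ (∀ T, CSFaux.scoreM (g m k) M T ≤ CSFaux.scoreM (g m k) M S) := by
    intro M S
    have h := hsame m k (CSFaux.toElection M)
    have h1 : S ∈ winners (f m k) (CSFaux.toElection M)
        ↔ S ∈ winners (g m k) (CSFaux.toElection M) := by rw [h]
    rw [CSFaux.winners_toElection, CSFaux.winners_toElection] at h1
    exact h1
  have hsingle : ∀ (φ : ∀ m k, Committee m k → ℝ) (x T : Committee m k),
      CSFaux.scoreM (φ m k) {(1 : Equiv.Perm (Fin m))} T
        ≤ CSFaux.scoreM (φ m k) {(1 : Equiv.Perm (Fin m))} x ↔ φ m k T ≤ φ m k x := by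
    intro φ x T
    rw [CSFaux.scoreM_singleton, CSFaux.scoreM_singleton, CSFaux.commPos_one,
      CSFaux.commPos_one]
  by_cases hconst : ∀ x y : Committee m k, f m k x = f m k y
  · have hgconst : ∀ x y : Committee m k, g m k x = g m k y := by
      have hg1 : ∀ x : Committee m k, ∀ T, g m k T ≤ g m k x := by
        intro x T
        have hx := (hWM {1} x).mp (fun T' => (hsingle f x T').mpr (le_of_eq (hconst T' x)))
        exact (hsingle g x T).mp (hx T)
      intro x y
      exact le_antisymm (hg1 y x) (hg1 x y)
    exact ⟨1, f m k X0 - g m k X0, one_pos, fun S => by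
      rw [hconst S X0, hgconst S X0]; ring⟩
  · push_neg at hconst
    obtain ⟨x, y, hxy⟩ := hconst
    have hkk : 1 ≤ k ∧ k < m := by
      by_contra hc
      push_neg at hc
      have : k = 0 ∨ k = m := by omega
      exact hxy (congrArg (f m k) (CSFaux.committee_subsingleton this x y))
    exact CSFaux.affine_of_nonconst hkk.2 hkk.1 (f m k) (g m k) (hf m k) (hg m k) hWM ⟨x, y, hxy⟩

/-- If two families of committee scoring functions define the same
committee scoring rule, then for each `m` and `k ≤ m` they are related by a
positive affine transformation. -/
theorem scoring_functions_unique_up_to_affine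
    (f g : ∀ m k, Committee m k → ℝ)
    (hf : ∀ m k, IsCSF (f m k)) (hg : ∀ m k, IsCSF (g m k))
    (hsame : SameRule f g) :
    ∀ m k, k ≤ m → AffEquiv (f m k) (g m k) :=
  scoring_functions_unique_up_to_affine' f g hf hg hsame
end

section
/- A committee scoring rule R_f defined by a family of committee scoring functions f = (f_{m,k}) satisfies the nonimposition property (for every candidate set C and every subset W ⊆ C there is an election E on C with R_f(E,|W|) = {W}) if and only if every committee scoring function f_{m,k} in the family is non-constant. -/
open Finset

/-- A multiwinner rule given by family `f` has the nonimposition property. -/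
def Nonimposition (f : ∀ m k, Committee m k → ℝ) : Prop :=
  ∀ (m k : ℕ), k ≤ m → ∀ W : Committee m k, ∃ E : Election m, winners (f m k) E = {W}

namespace NonimpAux

lemma dominates_of_counts {m : ℕ} {A B : Finset (Fin m)} (hcard : A.card = B.card)
    (h : ∀ z : Fin m, (B.filter (fun y => y ≤ z)).card ≤ (A.filter (fun y => y ≤ z)).card) :
    Dominates A B := by
  rw [Dominates, List.forall₂_iff_get]
  have hlA : (A.sort (· ≤ ·)).length = A.card := Finset.length_sort _
  have hlB : (B.sort (· ≤ ·)).length = B.card := Finset.length_sort _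
  refine ⟨by rw [hlA, hlB, hcard], ?_⟩
  intro i h₁ h₂
  by_contra hlt
  push_neg at hlt
  set lA := A.sort (· ≤ ·) with hlAdef
  set lB := B.sort (· ≤ ·) with hlBdef
  set z := lB.get ⟨i, h₂⟩ with hzdef
  have hsortA : lA.Pairwise (· ≤ ·) := Finset.pairwise_sort _ _
  have hsortB : lB.Pairwise (· ≤ ·) := Finset.pairwise_sort _ _
  have hB : i + 1 ≤ (B.filter (fun y => y ≤ z)).card := by
    have hsub : (lB.take (i+1)).toFinset ⊆ B.filter (fun y => y ≤ z) := by
      intro x hx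
      rw [List.mem_toFinset, List.mem_take_iff_getElem] at hx
      obtain ⟨j, hj, hx⟩ := hx
      have hj1 : j < i + 1 := lt_of_lt_of_le hj (min_le_left _ _)
      have hj2 : j < lB.length := lt_of_lt_of_le hj (min_le_right _ _)
      rw [Finset.mem_filter]
      constructor
      · rw [← Finset.mem_sort (α := Fin m) (· ≤ ·) (s := B), ← hlBdef, ← hx]
        exact List.getElem_mem _
      · rw [← hx]
        rcases Nat.lt_or_ge j i with hji | hji
        · have := hsortB.rel_get_of_lt (a := ⟨j, hj2⟩) (b := ⟨i, h₂⟩) (by exact hji)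
          simpa [hzdef] using this
        · have : j = i := by omega
          subst this
          simp [hzdef]
    calc i + 1 = (lB.take (i+1)).toFinset.card := by
            rw [List.toFinset_card_of_nodup (((List.take_sublist _ _)).nodup (Finset.sort_nodup _ _))]
            rw [List.length_take]
            omega
      _ ≤ _ := Finset.card_le_card hsub
  have hA : (A.filter (fun y => y ≤ z)).card ≤ i := by
    have hsub : A.filter (fun y => y ≤ z) ⊆ (lA.take i).toFinset := by
      intro x hx
      rw [Finset.mem_filter] at hx
      obtain ⟨hxA, hxz⟩ := hx
      have hxl : x ∈ lA := by
        rw [hlAdef, Finset.mem_sort (α := Fin m) (· ≤ ·)]; exact hxA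
      rw [List.mem_iff_getElem] at hxl
      obtain ⟨j, hj, hx⟩ := hxl
      have hji : j < i := by
        by_contra hge
        push_neg at hge
        have hle : lA.get ⟨i, h₁⟩ ≤ lA.get ⟨j, hj⟩ := by
          rcases Nat.lt_or_ge i j with hij | hij
          · exact hsortA.rel_get_of_lt (by exact hij)
          · have : i = j := by omega
            subst this; exact le_refl _
        have : lA.get ⟨j, hj⟩ = x := hx
        rw [this] at hle
        exact absurd (le_trans hle hxz) (not_le_of_gt hlt)
      rw [List.mem_toFinset, List.mem_take_iff_getElem]
      exact ⟨j, by omega, hx⟩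
    calc (A.filter (fun y => y ≤ z)).card ≤ (lA.take i).toFinset.card := Finset.card_le_card hsub
      _ ≤ (lA.take i).length := (lA.take i).toFinset_card_le
      _ ≤ i := by rw [List.length_take]; omega
  have := h z
  omega

lemma dominates_insert {m : ℕ} {Y : Finset (Fin m)} {a b : Fin m} (hab : a ≤ b)
    (ha : a ∉ Y) (hb : b ∉ Y) : Dominates (insert a Y) (insert b Y) := by
  apply dominates_of_counts
  · rw [Finset.card_insert_of_notMem ha, Finset.card_insert_of_notMem hb]
  · intro z
    rw [Finset.filter_insert, Finset.filter_insert]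
    by_cases hbz : b ≤ z
    · have haz : a ≤ z := le_trans hab hbz
      rw [if_pos haz, if_pos hbz,
        Finset.card_insert_of_notMem (fun hc => ha (Finset.mem_of_mem_filter _ hc)),
        Finset.card_insert_of_notMem (fun hc => hb (Finset.mem_of_mem_filter _ hc))]
    · rw [if_neg hbz]
      by_cases haz : a ≤ z
      · rw [if_pos haz]
        exact Finset.card_le_card (Finset.subset_insert _ _)
      · rw [if_neg haz]


noncomputable def G {m k : ℕ} (f : Committee m k → ℝ) (z0 c : Fin m) (S : Committee m k) : ℝ :=
  ∑ σ : Equiv.Perm (Fin m), f (commPos (σ.trans (Equiv.swap (σ c) z0)) S)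

lemma commPos_commPos {m k : ℕ} (v w : Equiv.Perm (Fin m)) (S : Committee m k) :
    commPos v (commPos w S) = commPos (w.trans v) S := by
  apply Subtype.ext
  show (S.1.image w).image v = S.1.image (w.trans v)
  rw [Finset.image_image]
  rfl

lemma G_relabel {m k : ℕ} (f : Committee m k → ℝ) (z0 : Fin m) (π : Equiv.Perm (Fin m))
    (c : Fin m) (S : Committee m k) :
    G f z0 (π c) (commPos π S) = G f z0 c S := by
  rw [G, G]
  refine Fintype.sum_equiv (Equiv.mulRight π) _ _ (fun σ' => ?_)
  rw [commPos_commPos]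
  have h1 : (Equiv.mulRight π σ' : Equiv.Perm (Fin m)) = π.trans σ' := Equiv.Perm.mul_def σ' π
  rw [h1]
  have h2 : (π.trans σ') c = σ' (π c) := rfl
  rw [h2, ← Equiv.trans_assoc]

lemma swap_image_eq {α : Type*} [DecidableEq α] {A : Finset α} {u v : α} (h : u ∈ A ↔ v ∈ A) :
    A.image (Equiv.swap u v) = A := by
  ext y
  simp only [Finset.mem_image]
  have key : ∀ x, x ∈ A → Equiv.swap u v x ∈ A := by
    intro x hx
    rcases eq_or_ne x u with rfl | hxu
    · rw [Equiv.swap_apply_left]; exact h.mp hx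
    rcases eq_or_ne x v with rfl | hxv
    · rw [Equiv.swap_apply_right]; exact h.mpr hx
    · rw [Equiv.swap_apply_of_ne_of_ne hxu hxv]; exact hx
  constructor
  · rintro ⟨x, hx, rfl⟩
    exact key x hx
  · intro hy
    refine ⟨Equiv.swap u v y, ?_, Equiv.swap_apply_self _ _ _⟩
    have h' : v ∈ A ↔ u ∈ A := h.symm
    rcases eq_or_ne y u with rfl | hyu
    · rw [Equiv.swap_apply_left]; exact h.mp hy
    rcases eq_or_ne y v with rfl | hyv
    · rw [Equiv.swap_apply_right]; exact h.mpr hy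
    · rw [Equiv.swap_apply_of_ne_of_ne hyu hyv]; exact hy

lemma exists_perm {m k : ℕ} (S S' : Committee m k) (c c' : Fin m)
    (h : (c ∈ S.1 ∧ c' ∈ S'.1) ∨ (c ∉ S.1 ∧ c' ∉ S'.1)) :
    ∃ π : Equiv.Perm (Fin m), π c = c' ∧ commPos π S = S' := by
  classical
  have hcard : Fintype.card {x // x ∈ S.1} = Fintype.card {x // x ∈ S'.1} := by
    rw [Fintype.card_coe, Fintype.card_coe, S.2, S'.2]
  let e1 : {x // x ∈ S.1} ≃ {x // x ∈ S'.1} := Fintype.equivOfCardEq hcard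
  have hcard2 : Fintype.card {x : Fin m // ¬ x ∈ S.1} = Fintype.card {x : Fin m // ¬ x ∈ S'.1} := by
    rw [Fintype.card_subtype_compl, Fintype.card_subtype_compl, hcard]
  let e2 : {x : Fin m // ¬ x ∈ S.1} ≃ {x : Fin m // ¬ x ∈ S'.1} := Fintype.equivOfCardEq hcard2
  let π0 : Equiv.Perm (Fin m) := Equiv.subtypeCongr e1 e2
  have hπ0mem : ∀ x (hx : x ∈ S.1), π0 x = (e1 ⟨x, hx⟩ : Fin m) := by
    intro x hx
    simp [π0, Equiv.subtypeCongr, hx]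
  have hπ0nmem : ∀ x (hx : ¬ x ∈ S.1), π0 x = (e2 ⟨x, hx⟩ : Fin m) := by
    intro x hx
    simp [π0, Equiv.subtypeCongr, hx]
  have hmem : ∀ x, x ∈ S.1 → π0 x ∈ S'.1 := fun x hx => by
    rw [hπ0mem x hx]; exact (e1 ⟨x, hx⟩).2
  have hnmem : ∀ x, x ∉ S.1 → π0 x ∉ S'.1 := fun x hx => by
    rw [hπ0nmem x hx]; exact (e2 ⟨x, hx⟩).2
  have himg : S.1.image π0 = S'.1 := by
    apply Finset.eq_of_subset_of_card_le
    · intro y hy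
      rw [Finset.mem_image] at hy
      obtain ⟨x, hx, rfl⟩ := hy
      exact hmem x hx
    · rw [Finset.card_image_of_injective _ π0.injective, S.2, S'.2]
  refine ⟨π0.trans (Equiv.swap (π0 c) c'), ?_, ?_⟩
  · show Equiv.swap (π0 c) c' (π0 c) = c'
    exact Equiv.swap_apply_left _ _
  · apply Subtype.ext
    show S.1.image (π0.trans (Equiv.swap (π0 c) c')) = S'.1
    have hcomp : S.1.image (π0.trans (Equiv.swap (π0 c) c')) =
        (S.1.image π0).image (Equiv.swap (π0 c) c') := by
      rw [Finset.image_image]; rfl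
    rw [hcomp, himg]
    apply swap_image_eq
    rcases h with ⟨h1, h2⟩ | ⟨h1, h2⟩
    · exact iff_of_true (hmem c h1) h2
    · exact iff_of_false (hnmem c h1) h2

lemma G_eq_of_mem {m k : ℕ} (f : Committee m k → ℝ) (z0 : Fin m) {c c' : Fin m}
    {S S' : Committee m k}
    (h : (c ∈ S.1 ∧ c' ∈ S'.1) ∨ (c ∉ S.1 ∧ c' ∉ S'.1)) :
    G f z0 c S = G f z0 c' S' := by
  obtain ⟨π, hπc, hπS⟩ := exists_perm S S' c c' h
  calc G f z0 c S = G f z0 (π c) (commPos π S) := (G_relabel f z0 π c S).symm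
    _ = G f z0 c' S' := by rw [hπc, hπS]



section Core

variable {m k : ℕ} (f : Committee m k → ℝ) (z0 : Fin m)

def exch (S : Committee m k) (c d : Fin m) (hc : c ∈ S.1) (hd : d ∉ S.1) : Committee m k :=
  ⟨insert d (S.1.erase c), by
    have hk : 0 < k := S.2 ▸ Finset.card_pos.mpr ⟨c, hc⟩
    rw [Finset.card_insert_of_notMem (fun hdY => hd (Finset.mem_of_mem_erase hdY)),
      Finset.card_erase_of_mem hc, S.2]
    omega⟩

lemma mem_exch_self (S : Committee m k) (c d : Fin m) (hc : c ∈ S.1) (hd : d ∉ S.1) :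
    d ∈ (exch S c d hc hd).1 := Finset.mem_insert_self _ _

lemma not_mem_exch (S : Committee m k) (c d : Fin m) (hc : c ∈ S.1) (hd : d ∉ S.1)
    (hcd : c ≠ d) : c ∉ (exch S c d hc hd).1 := by
  intro h
  rcases Finset.mem_insert.mp h with h | h
  · exact hcd h
  · exact Finset.notMem_erase _ _ h

variable (hz0 : ∀ x : Fin m, z0 ≤ x)

include hz0 in
lemma pair_le (hcsf : IsCSF f) (S : Committee m k) (c d : Fin m) (hc : c ∈ S.1) (hd : d ∉ S.1)
    (σ : Equiv.Perm (Fin m)) :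
    f (commPos (σ.trans (Equiv.swap (σ c) z0)) (exch S c d hc hd)) ≤
      f (commPos (σ.trans (Equiv.swap (σ c) z0)) S) := by
  set v := σ.trans (Equiv.swap (σ c) z0) with hv
  have hvc : v c = z0 := by
    show Equiv.swap (σ c) z0 (σ c) = z0
    exact Equiv.swap_apply_left _ _
  apply hcsf.mono
  set Y := (S.1.erase c).image v with hY
  have h1 : (commPos v S).1 = insert z0 Y := by
    show S.1.image v = _
    conv_lhs => rw [← Finset.insert_erase hc]
    rw [Finset.image_insert, hvc]
  have h2 : (commPos v (exch S c d hc hd)).1 = insert (v d) Y := by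
    show (insert d (S.1.erase c)).image v = _
    rw [Finset.image_insert]
  have hz0Y : z0 ∉ Y := by
    intro hmem
    rw [hY, Finset.mem_image] at hmem
    obtain ⟨x, hx, hx2⟩ := hmem
    have : x = c := v.injective (by rw [hx2, hvc])
    subst this
    exact Finset.notMem_erase _ _ hx
  have hvdY : v d ∉ Y := by
    intro hmem
    rw [hY, Finset.mem_image] at hmem
    obtain ⟨x, hx, hx2⟩ := hmem
    have : x = d := v.injective hx2
    subst this
    exact hd (Finset.mem_of_mem_erase hx)
  rw [h1, h2]
  exact dominates_insert (hz0 (v d)) hz0Y hvdY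

include hz0 in
lemma G_exch_le (hcsf : IsCSF f) (S : Committee m k) (c d : Fin m) (hc : c ∈ S.1) (hd : d ∉ S.1) :
    G f z0 c (exch S c d hc hd) ≤ G f z0 c S :=
  Finset.sum_le_sum (fun σ _ => pair_le f z0 hz0 hcsf S c d hc hd σ)

include hz0 in
lemma key_lt (hcsf : IsCSF f) (hnc : NonConstant f) (hkm : k < m)
    (c : Fin m) (S S' : Committee m k) (hcS : c ∈ S.1) (hcS' : c ∉ S'.1) :
    G f z0 c S' < G f z0 c S := by
  classical
  have hk : 0 < k := S.2 ▸ Finset.card_pos.mpr ⟨c, hcS⟩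
  -- find d ∉ S
  have hSne : S.1 ≠ Finset.univ := by
    intro h
    have hcm : S.1.card = m := by rw [h, Finset.card_univ, Fintype.card_fin]
    rw [S.2] at hcm
    omega
  obtain ⟨d, hd⟩ : ∃ d, d ∉ S.1 := by
    by_contra hcon
    push_neg at hcon
    exact hSne (Finset.eq_univ_iff_forall.mpr hcon)
  have hcd : c ≠ d := fun h => hd (h ▸ hcS)
  set Sd := exch S c d hcS hd with hSd
  have hcSd : c ∉ Sd.1 := not_mem_exch S c d hcS hd hcd
  have hG' : G f z0 c S' = G f z0 c Sd := G_eq_of_mem f z0 (Or.inr ⟨hcS', hcSd⟩)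
  rw [hG']
  rcases lt_or_eq_of_le (G_exch_le f z0 hz0 hcsf S c d hcS hd) with hlt | heq
  · exact hlt
  exfalso
  -- Equality case: derive that f is constant.
  -- E1: the basic exchange equalities.
  have E1 : ∀ (Z : Finset (Fin m)), Z.card = k - 1 → z0 ∉ Z → ∀ x : Fin m, x ∉ Z → x ≠ z0 →
      ∀ (hA : (insert z0 Z).card = k) (hB : (insert x Z).card = k),
      f ⟨insert z0 Z, hA⟩ = f ⟨insert x Z, hB⟩ := by
    intro Z hZ hz0Z x hxZ hxz0 hA hB
    set u := Equiv.swap c z0 with hu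
    have huc : u c = z0 := Equiv.swap_apply_left _ _
    have hcZu : c ∉ Z.image u.symm := by
      intro hmem
      rw [Finset.mem_image] at hmem
      obtain ⟨zz, hzz, hzz2⟩ := hmem
      have : zz = u c := by rw [← hzz2]; simp
      rw [huc] at this
      subst this
      exact hz0Z hzz
    have hS2card : (insert c (Z.image u.symm)).card = k := by
      rw [Finset.card_insert_of_notMem hcZu,
        Finset.card_image_of_injective _ u.symm.injective, hZ]
      omega
    set S₂ : Committee m k := ⟨insert c (Z.image u.symm), hS2card⟩ with hS₂
    have hcS₂ : c ∈ S₂.1 := Finset.mem_insert_self _ _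
    set d₂ := u.symm x with hd₂
    have hd₂c : d₂ ≠ c := by
      intro h
      apply hxz0
      have : x = u c := by rw [← h]; simp [hd₂]
      rw [huc] at this
      exact this
    have hd₂S₂ : d₂ ∉ S₂.1 := by
      intro hmem
      rcases Finset.mem_insert.mp hmem with h | h
      · exact hd₂c h
      · rw [Finset.mem_image] at h
        obtain ⟨zz, hzz, hzz2⟩ := h
        have : zz = x := u.symm.injective hzz2
        subst this
        exact hxZ hzz
    -- sum equality for the pair (S₂, d₂)
    have hsum : G f z0 c (exch S₂ c d₂ hcS₂ hd₂S₂) = G f z0 c S₂ := by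
      have e1 : G f z0 c S₂ = G f z0 c S := G_eq_of_mem f z0 (Or.inl ⟨hcS₂, hcS⟩)
      have e2 : G f z0 c (exch S₂ c d₂ hcS₂ hd₂S₂) = G f z0 c Sd :=
        G_eq_of_mem f z0 (Or.inr ⟨not_mem_exch S₂ c d₂ hcS₂ hd₂S₂ (Ne.symm hd₂c), hcSd⟩)
      rw [e1, e2, heq]
    simp only [G] at hsum
    have htermeq := (Finset.sum_eq_sum_iff_of_le
      (fun σ _ => pair_le f z0 hz0 hcsf S₂ c d₂ hcS₂ hd₂S₂ σ)).mp hsum u (Finset.mem_univ u)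
    -- evaluate the term at σ = u
    have hvu : u.trans (Equiv.swap (u c) z0) = u := by
      rw [huc, Equiv.swap_self]
      rfl
    rw [hvu] at htermeq
    have himg1 : commPos u S₂ = (⟨insert z0 Z, hA⟩ : Committee m k) := by
      apply Subtype.ext
      show (insert c (Z.image u.symm)).image u = insert z0 Z
      rw [Finset.image_insert, huc, Finset.image_image]
      congr 1
      have : (⇑u ∘ ⇑u.symm) = id := Equiv.self_comp_symm u
      rw [this, Finset.image_id]
    have himg2 : commPos u (exch S₂ c d₂ hcS₂ hd₂S₂) = (⟨insert x Z, hB⟩ : Committee m k) := by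
      apply Subtype.ext
      show (insert d₂ (S₂.1.erase c)).image u = insert x Z
      have herase : S₂.1.erase c = Z.image u.symm := by
        show (insert c (Z.image u.symm)).erase c = _
        exact Finset.erase_insert hcZu
      rw [herase, Finset.image_insert, Finset.image_image]
      have hud₂ : u d₂ = x := by simp [hd₂]
      rw [hud₂]
      congr 1
      have : (⇑u ∘ ⇑u.symm) = id := Equiv.self_comp_symm u
      rw [this, Finset.image_id]
    rw [himg1, himg2] at htermeq
    exact htermeq.symm
  -- the swap step
  have gswap : ∀ (Z : Finset (Fin m)), Z.card = k - 1 → z0 ∉ Z → ∀ z z' : Fin m,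
      z ∈ Z → z' ∉ Z → z' ≠ z0 →
      ∀ (hA : (insert z0 Z).card = k) (hB : (insert z0 (insert z' (Z.erase z))).card = k),
      f ⟨insert z0 Z, hA⟩ = f ⟨insert z0 (insert z' (Z.erase z)), hB⟩ := by
    intro Z hZ h0 z z' hz hz' hz'0 hA hB
    have hzz' : z ≠ z' := fun h => hz' (h ▸ hz)
    have hzz0 : z ≠ z0 := fun h => h0 (h ▸ hz)
    have hZ2card : (insert z' (Z.erase z)).card = k - 1 := by
      have h1 : 0 < Z.card := Finset.card_pos.mpr ⟨z, hz⟩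
      rw [Finset.card_insert_of_notMem (fun hc => hz' (Finset.mem_of_mem_erase hc)),
        Finset.card_erase_of_mem hz, hZ]
      omega
    have hz0Z2 : z0 ∉ insert z' (Z.erase z) := by
      intro hmem
      rcases Finset.mem_insert.mp hmem with h | h
      · exact hz'0 h.symm
      · exact h0 (Finset.mem_of_mem_erase h)
    have hzZ2 : z ∉ insert z' (Z.erase z) := by
      intro hmem
      rcases Finset.mem_insert.mp hmem with h | h
      · exact hzz' h
      · exact Finset.notMem_erase _ _ h
    have hBcard : (insert z' Z).card = k := by
      rw [Finset.card_insert_of_notMem hz', hZ]; omega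
    have e1 := E1 Z hZ h0 z' hz' hz'0 hA hBcard
    have e2 := E1 (insert z' (Z.erase z)) hZ2card hz0Z2 z hzZ2 hzz0 hB
      (by rw [Finset.card_insert_of_notMem hzZ2, hZ2card]; omega)
    have hsets : insert z (insert z' (Z.erase z)) = insert z' Z := by
      rw [Finset.insert_comm, Finset.insert_erase hz]
    rw [e1, e2]
    congr 1
    exact Subtype.ext hsets.symm
  -- reduction to committees containing z0
  have red : ∀ A : Committee m k, ∃ B : Committee m k, z0 ∈ B.1 ∧ f A = f B := by
    intro A
    by_cases hz0A : z0 ∈ A.1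
    · exact ⟨A, hz0A, rfl⟩
    obtain ⟨x, hx⟩ : A.1.Nonempty := Finset.card_pos.mp (by rw [A.2]; exact hk)
    have hxz0 : x ≠ z0 := fun h => hz0A (by rw [← h]; exact hx)
    have hZ : (A.1.erase x).card = k - 1 := by rw [Finset.card_erase_of_mem hx, A.2]
    have h0Z : z0 ∉ A.1.erase x := fun h => hz0A (Finset.mem_of_mem_erase h)
    have hxZ : x ∉ A.1.erase x := Finset.notMem_erase _ _
    have hA : (insert z0 (A.1.erase x)).card = k := by
      rw [Finset.card_insert_of_notMem h0Z, hZ]; omega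
    have hB : (insert x (A.1.erase x)).card = k := by
      rw [Finset.card_insert_of_notMem hxZ, hZ]; omega
    refine ⟨⟨insert z0 (A.1.erase x), hA⟩, Finset.mem_insert_self _ _, ?_⟩
    have h1 := E1 (A.1.erase x) hZ h0Z x hxZ hxz0 hA hB
    have h2 : A = (⟨insert x (A.1.erase x), hB⟩ : Committee m k) :=
      Subtype.ext (Finset.insert_erase hx).symm
    exact (congrArg f h2).trans h1.symm
  -- constancy on committees containing z0, by induction on the difference
  have gconst : ∀ (n : ℕ) (B B' : Committee m k), z0 ∈ B.1 → z0 ∈ B'.1 →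
      (B.1 \ B'.1).card = n → f B = f B' := by
    intro n
    induction n with
    | zero =>
      intro B B' hB hB' hn
      have hsub : B.1 ⊆ B'.1 := by
        rw [← Finset.sdiff_eq_empty_iff_subset]
        exact Finset.card_eq_zero.mp hn
      have : B.1 = B'.1 := Finset.eq_of_subset_of_card_le hsub (by rw [B.2, B'.2])
      exact congrArg f (Subtype.ext this)
    | succ n ih =>
      intro B B' hB hB' hn
      obtain ⟨z, hz⟩ : (B.1 \ B'.1).Nonempty := Finset.card_pos.mp (by omega)
      have hzB : z ∈ B.1 := (Finset.mem_sdiff.mp hz).1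
      have hzB' : z ∉ B'.1 := (Finset.mem_sdiff.mp hz).2
      have hzz0 : z ≠ z0 := fun h => hzB' (by rw [h]; exact hB')
      obtain ⟨z', hz'⟩ : (B'.1 \ B.1).Nonempty := by
        rcases Finset.eq_empty_or_nonempty (B'.1 \ B.1) with he | hne
        · exfalso
          have hsub : B'.1 ⊆ B.1 := Finset.sdiff_eq_empty_iff_subset.mp he
          have : B'.1 = B.1 := Finset.eq_of_subset_of_card_le hsub (by rw [B.2, B'.2])
          rw [this] at hn
          simp [Finset.sdiff_self] at hn
        · exact hne
      have hz'B' : z' ∈ B'.1 := (Finset.mem_sdiff.mp hz').1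
      have hz'B : z' ∉ B.1 := (Finset.mem_sdiff.mp hz').2
      have hz'z0 : z' ≠ z0 := fun h => hz'B (by rw [h]; exact hB)
      set Z := B.1.erase z0 with hZdef
      have hZcard : Z.card = k - 1 := by rw [hZdef, Finset.card_erase_of_mem hB, B.2]
      have hz0Z : z0 ∉ Z := Finset.notMem_erase _ _
      have hzZ : z ∈ Z := Finset.mem_erase.mpr ⟨hzz0, hzB⟩
      have hz'Z : z' ∉ Z := fun h => hz'B (Finset.mem_of_mem_erase h)
      have hBZ : B.1 = insert z0 Z := (Finset.insert_erase hB).symm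
      set Z₂ := insert z' (Z.erase z) with hZ₂def
      have hZ₂card : (insert z0 Z₂).card = k := by
        have h1 : 0 < Z.card := Finset.card_pos.mpr ⟨z, hzZ⟩
        have hz'e : z' ∉ Z.erase z := fun h => hz'Z (Finset.mem_of_mem_erase h)
        have hz0Z₂ : z0 ∉ Z₂ := by
          intro hmem
          rcases Finset.mem_insert.mp hmem with h | h
          · exact hz'z0 h.symm
          · exact hz0Z (Finset.mem_of_mem_erase h)
        rw [Finset.card_insert_of_notMem hz0Z₂, hZ₂def,
          Finset.card_insert_of_notMem hz'e, Finset.card_erase_of_mem hzZ, hZcard]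
        omega
      set B₂ : Committee m k := ⟨insert z0 Z₂, hZ₂card⟩ with hB₂def
      have hz0B₂ : z0 ∈ B₂.1 := Finset.mem_insert_self _ _
      have hfBB₂ : f B = f B₂ := by
        have hAcard : (insert z0 Z).card = k := by rw [← hBZ]; exact B.2
        have := gswap Z hZcard hz0Z z z' hzZ hz'Z hz'z0 hAcard hZ₂card
        rw [← this]
        exact congrArg f (Subtype.ext hBZ)
      have hdiff : B₂.1 \ B'.1 = (B.1 \ B'.1).erase z := by
        ext a
        constructor
        · intro ha
          have haB₂ : a ∈ B₂.1 := (Finset.mem_sdiff.mp ha).1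
          have haB' : a ∉ B'.1 := (Finset.mem_sdiff.mp ha).2
          have haz0 : a ≠ z0 := fun h => haB' (by rw [h]; exact hB')
          have haz' : a ≠ z' := fun h => haB' (by rw [h]; exact hz'B')
          rcases Finset.mem_insert.mp haB₂ with h | h
          · exact absurd h haz0
          rcases Finset.mem_insert.mp h with h2 | h2
          · exact absurd h2 haz'
          have haz : a ≠ z := (Finset.mem_erase.mp h2).1
          have haB : a ∈ B.1 := Finset.mem_of_mem_erase (Finset.mem_of_mem_erase h2)
          exact Finset.mem_erase.mpr ⟨haz, Finset.mem_sdiff.mpr ⟨haB, haB'⟩⟩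
        · intro ha
          have haz : a ≠ z := (Finset.mem_erase.mp ha).1
          have haB : a ∈ B.1 := (Finset.mem_sdiff.mp (Finset.mem_erase.mp ha).2).1
          have haB' : a ∉ B'.1 := (Finset.mem_sdiff.mp (Finset.mem_erase.mp ha).2).2
          have haz0 : a ≠ z0 := fun h => haB' (by rw [h]; exact hB')
          refine Finset.mem_sdiff.mpr ⟨?_, haB'⟩
          exact Finset.mem_insert.mpr (Or.inr (Finset.mem_insert.mpr (Or.inr
            (Finset.mem_erase.mpr ⟨haz, Finset.mem_erase.mpr ⟨haz0, haB⟩⟩))))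
      have hdcard : (B₂.1 \ B'.1).card = n := by
        rw [hdiff, Finset.card_erase_of_mem hz, hn]; omega
      rw [hfBB₂]
      exact ih B₂ B' hz0B₂ hB' hdcard
  obtain ⟨X, Y, hne⟩ := hnc
  apply hne
  obtain ⟨BX, hBX, hfX⟩ := red X
  obtain ⟨BY, hBY, hfY⟩ := red Y
  rw [hfX, hfY]
  exact gconst _ BX BY hBX hBY rfl

end Core


noncomputable def mkElection {m : ℕ} (ι : Type) [Fintype ι] (vs : ι → Equiv.Perm (Fin m)) : Election m :=
  ⟨Fintype.card ι, fun i => vs ((Fintype.equivFin ι).symm i)⟩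

lemma score_mkElection {m k : ℕ} (f : Committee m k → ℝ) (ι : Type) [Fintype ι]
    (vs : ι → Equiv.Perm (Fin m)) (S : Committee m k) :
    score f (mkElection ι vs) S = ∑ i : ι, f (commPos (vs i) S) :=
  (Fintype.sum_equiv (Fintype.equivFin ι) (fun x => f (commPos (vs x) S))
    (fun i => f (commPos ((mkElection ι vs).vote i) S)) (fun x => by simp [mkElection])).symm

noncomputable def elecFor {m k : ℕ} (z0 : Fin m) (W : Committee m k) : Election m :=
  mkElection (↥W.1 × Equiv.Perm (Fin m)) (fun p => p.2.trans (Equiv.swap (p.2 p.1.1) z0))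

lemma score_elecFor {m k : ℕ} (f : Committee m k → ℝ) (z0 : Fin m) (W S : Committee m k) :
    score f (elecFor z0 W) S = ∑ c : ↥W.1, G f z0 c.1 S := by
  rw [elecFor, score_mkElection, Fintype.sum_prod_type]
  rfl

lemma score_lt {m k : ℕ} {f : Committee m k → ℝ} (hcsf : IsCSF f) (hnc : NonConstant f)
    (hkm : k < m) (z0 : Fin m) (hz0 : ∀ x, z0 ≤ x) (W S : Committee m k) (hne : S ≠ W) :
    score f (elecFor z0 W) S < score f (elecFor z0 W) W := by
  rw [score_elecFor, score_elecFor]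
  have hWS : ¬ W.1 ⊆ S.1 := by
    intro hsub
    exact hne (Subtype.ext (Finset.eq_of_subset_of_card_le hsub (by rw [S.2, W.2])).symm)
  obtain ⟨c₀, hc₀W, hc₀S⟩ := Finset.not_subset.mp hWS
  apply Finset.sum_lt_sum (s := Finset.univ)
  · intro c _
    by_cases hcS : c.1 ∈ S.1
    · exact le_of_eq (G_eq_of_mem f z0 (Or.inl ⟨hcS, c.2⟩))
    · exact le_of_lt (key_lt f z0 hz0 hcsf hnc hkm c.1 W S c.2 hcS)
  · exact ⟨⟨c₀, hc₀W⟩, Finset.mem_univ _, key_lt f z0 hz0 hcsf hnc hkm c₀ W S hc₀W hc₀S⟩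

end NonimpAux

/-- A committee scoring rule satisfies nonimposition iff every one
of its committee scoring functions (for nondegenerate sizes) is non-constant. -/
theorem nonimposition_iff_nondegenerate
    (f : ∀ m k, Committee m k → ℝ) (hf : ∀ m k, IsCSF (f m k)) :
    Nonimposition f ↔ NonDegenerate f := by
  constructor
  · intro hni m k hk hkm
    by_contra hnc
    rw [NonConstant] at hnc
    push_neg at hnc
    obtain ⟨Wset, _, hWcard⟩ := Finset.exists_subset_card_eq
      (s := (Finset.univ : Finset (Fin m))) (n := k)
      (by rw [Finset.card_univ, Fintype.card_fin]; omega)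
    set W : Committee m k := ⟨Wset, hWcard⟩ with hWdef
    obtain ⟨E, hE⟩ := hni m k (le_of_lt hkm) W
    obtain ⟨c, hc⟩ : W.1.Nonempty := Finset.card_pos.mp (by rw [W.2]; exact hk)
    obtain ⟨d, hd⟩ : ∃ d, d ∉ W.1 := by
      by_contra hcon
      push_neg at hcon
      have h1 : W.1 = Finset.univ := Finset.eq_univ_iff_forall.mpr hcon
      have h2 := congrArg Finset.card h1
      rw [W.2, Finset.card_univ, Fintype.card_fin] at h2
      omega
    set W' := NonimpAux.exch W c d hc hd with hW'def
    have hWW' : W' ≠ W := by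
      intro h
      apply hd
      rw [← h]
      exact NonimpAux.mem_exch_self W c d hc hd
    have hscore : ∀ T T' : Committee m k, score (f m k) E T = score (f m k) E T' := by
      intro T T'
      unfold score
      exact Finset.sum_congr rfl (fun i _ => hnc _ _)
    have hW' : W' ∈ winners (f m k) E := fun T => le_of_eq (hscore T W')
    rw [hE] at hW'
    exact hWW' hW'
  · intro hnd m k hk W
    rcases Nat.eq_zero_or_pos k with hk0 | hkpos
    · subst hk0
      refine ⟨⟨0, Fin.elim0⟩, ?_⟩
      ext S
      simp only [winners, Set.mem_setOf_eq, Set.mem_singleton_iff]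
      constructor
      · intro _
        apply Subtype.ext
        rw [Finset.card_eq_zero.mp S.2, Finset.card_eq_zero.mp W.2]
      · intro _ T
        simp [score]
    rcases Nat.lt_or_ge k m with hkm | hkm
    · have hnc : NonConstant (f m k) := hnd m k hkpos hkm
      have hm : 0 < m := lt_of_le_of_lt (Nat.zero_le k) hkm
      set z0 : Fin m := ⟨0, hm⟩ with hz0def
      have hz0 : ∀ x : Fin m, z0 ≤ x := fun x => by
        rw [Fin.le_def]
        exact Nat.zero_le _
      refine ⟨NonimpAux.elecFor z0 W, ?_⟩
      ext S
      simp only [winners, Set.mem_setOf_eq, Set.mem_singleton_iff]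
      constructor
      · intro hS
        by_contra hne
        have h1 := NonimpAux.score_lt (hf m k) hnc hkm z0 hz0 W S hne
        have h2 := hS W
        linarith
      · rintro rfl
        intro T
        rcases eq_or_ne T S with rfl | hne
        · exact le_refl _
        · exact le_of_lt (NonimpAux.score_lt (hf m k) hnc hkm z0 hz0 _ T hne)
    · have hkm' : k = m := le_antisymm hk hkm
      refine ⟨⟨0, Fin.elim0⟩, ?_⟩
      ext S
      simp only [winners, Set.mem_setOf_eq, Set.mem_singleton_iff]
      constructor
      · intro _
        apply Subtype.ext
        have h1 : S.1 = Finset.univ :=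
          Finset.eq_univ_of_card _ (by rw [S.2, hkm', Fintype.card_fin])
        have h2 : W.1 = Finset.univ :=
          Finset.eq_univ_of_card _ (by rw [W.2, hkm', Fintype.card_fin])
        rw [h1, h2]
      · intro _ T
        simp [score]
end

section
/- In an election with at least 2k candidates where two disjoint size-k committees W_1 and W_2 are both winning under the Bloc rule, every member of W_1 ∪ W_2 has the same k-Approval score, and consequently every size-k subset W of W_1 ∪ W_2 is also a winning committee; hence Bloc does not satisfy 2-nonimposition for disjoint committees. -/
open Finset

/-- The `k`-Approval score of candidate `c`: the number of voters ranking `c`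
among the top `k` positions. -/
def kApprovalScore {m : ℕ} (k : ℕ) (E : Election m) (c : Fin m) : ℕ :=
  (Finset.univ.filter (fun i : Fin E.n => (E.vote i c : ℕ) < k)).card

lemma score_bloc_eq (m k : ℕ) (E : Election m) (S : Committee m k) :
    score (blocF m k) E S = ∑ c ∈ S.1, (kApprovalScore k E c : ℝ) := by
  unfold score blocF kApprovalScore commPos
  have h : ∀ i : Fin E.n,
      ((S.1.image (E.vote i)).filter (fun p : Fin m => (p : ℕ) < k)).card
        = (S.1.filter (fun c => ((E.vote i c : Fin m) : ℕ) < k)).card := by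
    intro i
    rw [Finset.filter_image, Finset.card_image_of_injective _ (E.vote i).injective]
  simp only [h, Finset.card_filter]
  push_cast
  rw [Finset.sum_comm]

/-- If two disjoint size-`k` committees are both winning under Bloc,
then all members of their union have equal `k`-Approval scores, every size-`k`
subset of the union wins, and hence (for `k ≥ 2`) `W₁, W₂` are not the only
winners, so Bloc fails 2-nonimposition for disjoint committees. -/
theorem bloc_disjoint_winning_committees
    (m k : ℕ) (hm : 2 * k ≤ m) (E : Election m)
    (W₁ W₂ : Committee m k) (hdisj : Disjoint W₁.1 W₂.1)
    (h₁ : W₁ ∈ winners (blocF m k) E) (h₂ : W₂ ∈ winners (blocF m k) E) :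
    (∀ c ∈ W₁.1 ∪ W₂.1, ∀ c' ∈ W₁.1 ∪ W₂.1, kApprovalScore k E c = kApprovalScore k E c') ∧
    (∀ W : Committee m k, W.1 ⊆ W₁.1 ∪ W₂.1 → W ∈ winners (blocF m k) E) ∧
    (2 ≤ k → ∃ W ∈ winners (blocF m k) E, W ≠ W₁ ∧ W ≠ W₂) := by
  set sc : Fin m → ℝ := fun c => (kApprovalScore k E c : ℝ) with hsc
  -- swap argument
  have key : ∀ (A B : Committee m k), A ∈ winners (blocF m k) E → Disjoint A.1 B.1 →
      ∀ c ∈ A.1, ∀ c' ∈ B.1, sc c' ≤ sc c := by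
    intro A B hA hAB c hc c' hc'
    have hc'A : c' ∉ A.1.erase c := fun h =>
      (Finset.disjoint_left.mp hAB (Finset.mem_of_mem_erase h)) hc'
    set T : Committee m k := ⟨insert c' (A.1.erase c), by
      have hk : 0 < k := A.2 ▸ Finset.card_pos.mpr ⟨c, hc⟩
      rw [Finset.card_insert_of_notMem hc'A, Finset.card_erase_of_mem hc, A.2]
      omega⟩ with hT
    have := hA T
    rw [score_bloc_eq, score_bloc_eq] at this
    have hTsum : ∑ x ∈ T.1, sc x = sc c' + (∑ x ∈ A.1, sc x - sc c) := by
      rw [hT]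
      simp only [Finset.sum_insert hc'A]
      rw [Finset.sum_erase_eq_sub hc]
    rw [hTsum] at this
    linarith
  have keyne : ∀ c ∈ W₁.1, ∀ c' ∈ W₂.1, sc c = sc c' :=
    fun c hc c' hc' => le_antisymm (key W₂ W₁ h₂ hdisj.symm c' hc' c hc)
      (key W₁ W₂ h₁ hdisj c hc c' hc')
  have eqall : ∀ c ∈ W₁.1 ∪ W₂.1, ∀ c' ∈ W₁.1 ∪ W₂.1, sc c = sc c' := by
    intro c hc c' hc'
    rcases Finset.mem_union.mp hc with h | h <;> rcases Finset.mem_union.mp hc' with h' | h'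
    · obtain ⟨b, hb⟩ := Finset.card_pos.mp (W₂.2 ▸ (W₁.2 ▸ Finset.card_pos.mpr ⟨c, h⟩))
      rw [keyne c h b hb, ← keyne c' h' b hb]
    · exact keyne c h c' h'
    · exact (keyne c' h' c h).symm
    · obtain ⟨b, hb⟩ := Finset.card_pos.mp (W₁.2 ▸ (W₂.2 ▸ Finset.card_pos.mpr ⟨c, h⟩))
      rw [← keyne b hb c h, keyne b hb c' h']
  have hpart2 : ∀ W : Committee m k, W.1 ⊆ W₁.1 ∪ W₂.1 → W ∈ winners (blocF m k) E := by
    intro W hW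
    rcases Nat.eq_zero_or_pos k with hk | hk
    · have : W = W₁ := Subtype.ext (by
        rw [Finset.card_eq_zero.mp (W.2.trans hk), Finset.card_eq_zero.mp (W₁.2.trans hk)])
      rwa [this]
    · obtain ⟨c₀, hc₀⟩ := Finset.card_pos.mp (W₁.2 ▸ hk)
      have hc₀u : c₀ ∈ W₁.1 ∪ W₂.1 := Finset.mem_union_left _ hc₀
      have hsum : ∀ (A : Committee m k), A.1 ⊆ W₁.1 ∪ W₂.1 →
          score (blocF m k) E A = k * sc c₀ := by
        intro A hA
        rw [score_bloc_eq]
        rw [Finset.sum_congr rfl (fun x hx => eqall x (hA hx) c₀ hc₀u)]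
        rw [Finset.sum_const, A.2, nsmul_eq_mul]
      intro T
      rw [hsum W hW, ← hsum W₁ Finset.subset_union_left]
      exact h₁ T
  refine ⟨fun c hc c' hc' => Nat.cast_injective (eqall c hc c' hc'), hpart2, ?_⟩
  · intro hk
    obtain ⟨a, ha⟩ := Finset.card_pos.mp (W₁.2 ▸ (by omega : 0 < k))
    obtain ⟨b, hb⟩ := Finset.card_pos.mp (W₂.2 ▸ (by omega : 0 < k))
    have hbnot : b ∉ W₁.1.erase a := fun h =>
      Finset.disjoint_left.mp hdisj (Finset.mem_of_mem_erase h) hb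
    set W : Committee m k := ⟨insert b (W₁.1.erase a), by
      rw [Finset.card_insert_of_notMem hbnot, Finset.card_erase_of_mem ha, W₁.2]; omega⟩
    have hWsub : W.1 ⊆ W₁.1 ∪ W₂.1 := by
      intro x hx
      rcases Finset.mem_insert.mp hx with h | h
      · exact Finset.mem_union_right _ (h ▸ hb)
      · exact Finset.mem_union_left _ (Finset.mem_of_mem_erase h)
    refine ⟨W, ?_, ?_, ?_⟩
    · exact hpart2 W hWsub
    · intro h
      exact Finset.disjoint_left.mp hdisj (h ▸ (Finset.mem_insert_self b _ : b ∈ W.1)) hb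
    · -- W ≠ W₂: erase has an element, in W₁, not in W₂
      have : 0 < (W₁.1.erase a).card := by
        rw [Finset.card_erase_of_mem ha, W₁.2]; omega
      obtain ⟨d, hd⟩ := Finset.card_pos.mp this
      intro h
      have hdW : d ∈ W.1 := Finset.mem_insert_of_mem hd
      rw [h] at hdW
      exact Finset.disjoint_left.mp hdisj (Finset.mem_of_mem_erase hd) hdW
end

section
/- Bloc is the only nontrivial committee scoring rule that is both weakly separable and top-k-counting. -/
open Finset

/-- The rule defined by `f` is weakly separable (as a rule). -/
def WeaklySeparableRule (f : ∀ m k, Committee m k → ℝ) : Prop :=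
  ∃ g : ∀ m k, Committee m k → ℝ,
    (∀ m k, IsCSF (g m k)) ∧ (∀ m k, WeaklySeparable (g m k)) ∧ SameRule f g

/-- The rule defined by `f` is top-`k`-counting (as a rule). -/
def TopKCountingRule (f : ∀ m k, Committee m k → ℝ) : Prop :=
  ∃ g : ∀ m k, Committee m k → ℝ,
    (∀ m k, IsCSF (g m k)) ∧ (∀ m k, TopKCounting (g m k)) ∧ SameRule f g

section BlocAux

variable {m k : ℕ}

/-- number of committee members among the top `k` positions -/
private def cnt (k : ℕ) (S : Finset (Fin m)) : ℕ :=
  (S.filter (fun p : Fin m => (p : ℕ) < k)).card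

private lemma cnt_le (S : Finset (Fin m)) : cnt k S ≤ S.card :=
  Finset.card_filter_le _ _

/-- the set of top-`k` positions -/
private def KF (m k : ℕ) : Finset (Fin m) :=
  Finset.univ.filter (fun p : Fin m => (p : ℕ) < k)

private lemma mem_KF {p : Fin m} : p ∈ KF m k ↔ (p : ℕ) < k := by
  simp [KF]

private lemma card_KF (h : k ≤ m) : (KF m k).card = k := by
  have : KF m k = Finset.map (Fin.castLEEmb h) Finset.univ := by
    ext p
    simp only [mem_KF, Finset.mem_map, Finset.mem_univ, true_and]
    constructor
    · intro hp; exact ⟨⟨(p : ℕ), hp⟩, by ext; simp⟩ -- ok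
    · rintro ⟨q, rfl⟩; simpa using q.2
  rw [this, Finset.card_map, Finset.card_univ, Fintype.card_fin]

private lemma cnt_KF : cnt k (KF m k) = k ↔ (KF m k).card = k := by
  unfold cnt
  rw [Finset.filter_true_of_mem (fun p hp => mem_KF.mp hp)]

private lemma eq_KF_of_cnt {S : Finset (Fin m)} (hS : S.card = k) (h : cnt k S = k) :
    S = KF m k := by
  have hkm : k ≤ m := by
    have := Finset.card_le_univ S
    rwa [hS, Fintype.card_fin] at this
  have h1 : S.filter (fun p : Fin m => (p : ℕ) < k) = S :=
    Finset.eq_of_subset_of_card_le (Finset.filter_subset _ _) (by rw [hS]; exact h.ge)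
  have hsub : S ⊆ KF m k := by
    intro p hp
    rw [mem_KF]
    have : p ∈ S.filter (fun p : Fin m => (p : ℕ) < k) := h1.symm ▸ hp
    exact (Finset.mem_filter.mp this).2
  exact (Finset.eq_of_subset_of_card_le hsub (by rw [card_KF hkm, hS])).symm.symm

private lemma swap_mem {a b c : Fin m} {S : Finset (Fin m)} (h : a ∈ S ↔ b ∈ S)
    (hc : c ∈ S) : Equiv.swap a b c ∈ S := by
  rcases eq_or_ne c a with rfl | hca
  · rw [Equiv.swap_apply_left]; exact h.mp hc
  rcases eq_or_ne c b with rfl | hcb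
  · rw [Equiv.swap_apply_right]; exact h.mpr hc
  · rwa [Equiv.swap_apply_of_ne_of_ne hca hcb]

private lemma image_swap_eq_self {a b : Fin m} {S : Finset (Fin m)} (h : a ∈ S ↔ b ∈ S) :
    S.image ⇑(Equiv.swap a b) = S := by
  apply Finset.eq_of_subset_of_card_le
  · intro c hc
    rw [Finset.mem_image] at hc
    obtain ⟨d, hd, rfl⟩ := hc
    exact swap_mem h hd
  · rw [Finset.card_image_of_injective _ (Equiv.swap a b).injective]

private lemma image_swap_mem_notmem {a b : Fin m} {S : Finset (Fin m)} (ha : a ∈ S)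
    (hb : b ∉ S) : S.image ⇑(Equiv.swap a b) = insert b (S.erase a) := by
  ext c
  simp only [Finset.mem_image, Finset.mem_insert, Finset.mem_erase]
  constructor
  · rintro ⟨d, hd, rfl⟩
    rcases eq_or_ne d a with rfl | hda
    · left; exact Equiv.swap_apply_left _ _
    · have hdb : d ≠ b := fun h => hb (h ▸ hd)
      rw [Equiv.swap_apply_of_ne_of_ne hda hdb]
      exact Or.inr ⟨hda, hd⟩
  · rintro (rfl | ⟨hca, hcS⟩)
    · exact ⟨_, ha, Equiv.swap_apply_left _ _⟩
    · have hcb : c ≠ b := fun h => hb (h ▸ hcS)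
      exact ⟨c, hcS, Equiv.swap_apply_of_ne_of_ne hca hcb⟩

/-- The committee obtained from the top-`k` committee by replacing `i` (a top
position) by `x` (a non-top position). -/
private def Sx (hkm : k < m) {i : Fin m} (hi : (i : ℕ) < k) (x : Fin m)
    (_hx : k ≤ (x : ℕ)) : Committee m k :=
  ⟨insert x ((KF m k).erase i), by
    rw [Finset.card_insert_of_notMem, Finset.card_erase_of_mem (mem_KF.mpr hi),
      card_KF hkm.le]
    · omega
    · intro hmem
      exact absurd (mem_KF.mp (Finset.mem_of_mem_erase hmem)) (by omega)⟩

private lemma cnt_Sx (hkm : k < m) {i : Fin m} (hi : (i : ℕ) < k) (x : Fin m)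
    (hx : k ≤ (x : ℕ)) : cnt k (Sx hkm hi x hx).1 = k - 1 := by
  show cnt k (insert x ((KF m k).erase i)) = k - 1
  unfold cnt
  rw [Finset.filter_insert, if_neg (by omega),
    Finset.filter_true_of_mem (fun p hp => mem_KF.mp (Finset.mem_of_mem_erase hp)),
    Finset.card_erase_of_mem (mem_KF.mpr hi), card_KF hkm.le]

private lemma pair_score_eq (hk : 0 < k) (hkm : k < m)
    (g h : Committee m k → ℝ)
    (c : ℕ → ℝ) (hmono : ∀ i j, i ≤ j → j ≤ k → c i ≤ c j)
    (hh : ∀ S : Committee m k, h S = c (cnt k S.1))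
    (hsame : ∀ E : Election m, winners g E = winners h E)
    (v₁ v₂ : Equiv.Perm (Fin m)) (S₁ S₂ : Committee m k)
    (h1 : S₁.1.image ⇑v₁ = KF m k) (h2 : S₂.1.image ⇑v₂ = KF m k)
    (h12 : S₁.1.image ⇑v₂ = S₁.1) (h21 : S₂.1.image ⇑v₁ = S₂.1)
    (hc1 : cnt k S₁.1 = k - 1) (hc2 : cnt k S₂.1 = k - 1) :
    g S₁ = g S₂ := by
  have hKFcard : (KF m k).card = k := card_KF hkm.le
  set T0 : Committee m k := ⟨KF m k, hKFcard⟩ with hT0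
  set E : Election m := ⟨2, ![v₁, v₂]⟩ with hE
  have hvote0 : E.vote 0 = v₁ := rfl
  have hvote1 : E.vote 1 = v₂ := rfl
  have hscoresum : ∀ (φ : Committee m k → ℝ) (T : Committee m k),
      score φ E T = φ (commPos v₁ T) + φ (commPos v₂ T) := by
    intro φ T
    show ∑ i : Fin 2, φ (commPos (![v₁, v₂] i) T) = _
    rw [Fin.sum_univ_two]
    rfl
  have hcntle : ∀ (v : Equiv.Perm (Fin m)) (T : Committee m k),
      cnt k (T.1.image ⇑v) ≤ k := by
    intro v T
    calc cnt k (T.1.image ⇑v) ≤ (T.1.image ⇑v).card := cnt_le _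
    _ = k := by rw [Finset.card_image_of_injective _ v.injective, T.2]
  have hcKF : cnt k (KF m k) = k := by
    unfold cnt
    rw [Finset.filter_true_of_mem (fun p hp => mem_KF.mp hp), hKFcard]
  have hmax : ∀ T : Committee m k, score h E T ≤ c k + c (k - 1) := by
    intro T
    rw [hscoresum, hh, hh]
    show c (cnt k (T.1.image ⇑v₁)) + c (cnt k (T.1.image ⇑v₂)) ≤ _
    by_cases hT : cnt k (T.1.image ⇑v₁) = k
    · have himg : T.1.image ⇑v₁ = KF m k :=
        eq_KF_of_cnt (by rw [Finset.card_image_of_injective _ v₁.injective, T.2]) hT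
      have hTS : T = S₁ := by
        apply Subtype.ext
        exact Finset.image_injective v₁.injective (himg.trans h1.symm)
      rw [hTS, h1, h12, hcKF, hc1]
    · have hle : cnt k (T.1.image ⇑v₁) ≤ k - 1 := by
        have := hcntle v₁ T; omega
      have := hmono _ (k - 1) hle (by omega)
      have := hmono _ k (hcntle v₂ T) le_rfl
      linarith
  have hW1 : S₁ ∈ winners h E := by
    intro T
    have hs : score h E S₁ = c k + c (k - 1) := by
      rw [hscoresum, hh, hh]
      show c (cnt k (S₁.1.image ⇑v₁)) + c (cnt k (S₁.1.image ⇑v₂)) = _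
      rw [h1, h12, hcKF, hc1]
    rw [hs]; exact hmax T
  have hW2 : S₂ ∈ winners h E := by
    intro T
    have hs : score h E S₂ = c k + c (k - 1) := by
      rw [hscoresum, hh, hh]
      show c (cnt k (S₂.1.image ⇑v₁)) + c (cnt k (S₂.1.image ⇑v₂)) = _
      rw [h21, h2, hcKF, hc2]; ring
    rw [hs]; exact hmax T
  rw [← hsame E] at hW1 hW2
  have e1 : score g E S₂ ≤ score g E S₁ := hW1 S₂
  have e2 : score g E S₁ ≤ score g E S₂ := hW2 S₁
  have c11 : commPos v₁ S₁ = T0 := Subtype.ext h1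
  have c12 : commPos v₂ S₁ = S₁ := Subtype.ext h12
  have c21 : commPos v₁ S₂ = S₂ := Subtype.ext h21
  have c22 : commPos v₂ S₂ = T0 := Subtype.ext h2
  rw [hscoresum, hscoresum, c11, c12, c21, c22] at e1 e2
  linarith

private lemma gamma_top (hk : 0 < k) (hkm : k < m)
    (g h : Committee m k → ℝ)
    (γ : Fin m → ℝ) (hg : ∀ S : Committee m k, g S = ∑ i ∈ S.1, γ i)
    (c : ℕ → ℝ) (hmono : ∀ i j, i ≤ j → j ≤ k → c i ≤ c j)
    (hh : ∀ S : Committee m k, h S = c (cnt k S.1))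
    (hsame : ∀ E : Election m, winners g E = winners h E)
    (i j : Fin m) (hi : (i : ℕ) < k) (hj : (j : ℕ) < k) : γ i = γ j := by
  rcases eq_or_ne i j with rfl | hij
  · rfl
  set x : Fin m := ⟨k, hkm⟩ with hxdef
  have hx : k ≤ (x : ℕ) := le_rfl
  have hxi : x ≠ i := by intro h'; apply absurd hi; rw [← h']; omega
  have hxj : x ≠ j := by intro h'; apply absurd hj; rw [← h']; omega
  set S₁ := Sx hkm hi x hx with hS₁
  set S₂ := Sx hkm hj x hx with hS₂
  have hS₁v : S₁.1 = insert x ((KF m k).erase i) := rfl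
  have hS₂v : S₂.1 = insert x ((KF m k).erase j) := rfl
  have hxKF : x ∉ KF m k := by rw [mem_KF]; omega
  -- memberships
  have hxS₁ : x ∈ S₁.1 := Finset.mem_insert_self _ _
  have hxS₂ : x ∈ S₂.1 := Finset.mem_insert_self _ _
  have hiS₁ : i ∉ S₁.1 := by
    rw [hS₁v, Finset.mem_insert]
    rintro (h' | h')
    · exact hxi h'.symm
    · exact (Finset.notMem_erase _ _) h'
  have hjS₂ : j ∉ S₂.1 := by
    rw [hS₂v, Finset.mem_insert]
    rintro (h' | h')
    · exact hxj h'.symm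
    · exact (Finset.notMem_erase _ _) h'
  have hjS₁ : j ∈ S₁.1 := by
    rw [hS₁v, Finset.mem_insert]
    exact Or.inr (Finset.mem_erase.mpr ⟨hij.symm, mem_KF.mpr hj⟩)
  have hiS₂ : i ∈ S₂.1 := by
    rw [hS₂v, Finset.mem_insert]
    exact Or.inr (Finset.mem_erase.mpr ⟨hij, mem_KF.mpr hi⟩)
  have key : g S₁ = g S₂ := by
    apply pair_score_eq hk hkm g h c hmono hh hsame (Equiv.swap i x) (Equiv.swap j x)
      S₁ S₂ _ _ _ _ (cnt_Sx hkm hi x hx) (cnt_Sx hkm hj x hx)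
    · rw [Equiv.swap_comm, image_swap_mem_notmem hxS₁ hiS₁, hS₁v,
        Finset.erase_insert (fun h' => hxKF (Finset.mem_of_mem_erase h')),
        Finset.insert_erase (mem_KF.mpr hi)]
    · rw [Equiv.swap_comm, image_swap_mem_notmem hxS₂ hjS₂, hS₂v,
        Finset.erase_insert (fun h' => hxKF (Finset.mem_of_mem_erase h')),
        Finset.insert_erase (mem_KF.mpr hj)]
    · exact image_swap_eq_self (iff_of_true hjS₁ hxS₁)
    · exact image_swap_eq_self (iff_of_true hiS₂ hxS₂)
  rw [hg, hg, hS₁v, hS₂v] at key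
  rw [Finset.sum_insert (fun h' => hxKF (Finset.mem_of_mem_erase h')),
    Finset.sum_insert (fun h' => hxKF (Finset.mem_of_mem_erase h')),
    Finset.sum_erase_eq_sub (mem_KF.mpr hi), Finset.sum_erase_eq_sub (mem_KF.mpr hj)] at key
  linarith

private lemma gamma_bot (hk : 0 < k) (hkm : k < m)
    (g h : Committee m k → ℝ)
    (γ : Fin m → ℝ) (hg : ∀ S : Committee m k, g S = ∑ i ∈ S.1, γ i)
    (c : ℕ → ℝ) (hmono : ∀ i j, i ≤ j → j ≤ k → c i ≤ c j)
    (hh : ∀ S : Committee m k, h S = c (cnt k S.1))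
    (hsame : ∀ E : Election m, winners g E = winners h E)
    (p q : Fin m) (hp : k ≤ (p : ℕ)) (hq : k ≤ (q : ℕ)) : γ p = γ q := by
  rcases eq_or_ne p q with rfl | hpq
  · rfl
  set e : Fin m := ⟨k - 1, by omega⟩ with hedef
  have he : (e : ℕ) < k := by show k - 1 < k; omega
  have hep : e ≠ p := by intro h'; apply absurd hp; rw [← h']; show ¬ (k ≤ k - 1); omega
  have heq : e ≠ q := by intro h'; apply absurd hq; rw [← h']; show ¬ (k ≤ k - 1); omega
  set S₁ := Sx hkm he p hp with hS₁
  set S₂ := Sx hkm he q hq with hS₂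
  have hS₁v : S₁.1 = insert p ((KF m k).erase e) := rfl
  have hS₂v : S₂.1 = insert q ((KF m k).erase e) := rfl
  have hpKF : p ∉ KF m k := by rw [mem_KF]; omega
  have hqKF : q ∉ KF m k := by rw [mem_KF]; omega
  have hpS₁ : p ∈ S₁.1 := Finset.mem_insert_self _ _
  have hqS₂ : q ∈ S₂.1 := Finset.mem_insert_self _ _
  have heS₁ : e ∉ S₁.1 := by
    rw [hS₁v, Finset.mem_insert]
    rintro (h' | h')
    · exact hep h'
    · exact (Finset.notMem_erase _ _) h'
  have heS₂ : e ∉ S₂.1 := by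
    rw [hS₂v, Finset.mem_insert]
    rintro (h' | h')
    · exact heq h'
    · exact (Finset.notMem_erase _ _) h'
  have hqS₁ : q ∉ S₁.1 := by
    rw [hS₁v, Finset.mem_insert]
    rintro (h' | h')
    · exact hpq h'.symm
    · exact hqKF (Finset.mem_of_mem_erase h')
  have hpS₂ : p ∉ S₂.1 := by
    rw [hS₂v, Finset.mem_insert]
    rintro (h' | h')
    · exact hpq h'
    · exact hpKF (Finset.mem_of_mem_erase h')
  have key : g S₁ = g S₂ := by
    apply pair_score_eq hk hkm g h c hmono hh hsame (Equiv.swap e p) (Equiv.swap e q)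
      S₁ S₂ _ _ _ _ (cnt_Sx hkm he p hp) (cnt_Sx hkm he q hq)
    · rw [Equiv.swap_comm, image_swap_mem_notmem hpS₁ heS₁, hS₁v,
        Finset.erase_insert (fun h' => hpKF (Finset.mem_of_mem_erase h')),
        Finset.insert_erase (mem_KF.mpr he)]
    · rw [Equiv.swap_comm, image_swap_mem_notmem hqS₂ heS₂, hS₂v,
        Finset.erase_insert (fun h' => hqKF (Finset.mem_of_mem_erase h')),
        Finset.insert_erase (mem_KF.mpr he)]
    · exact image_swap_eq_self (iff_of_false heS₁ hqS₁)
    · exact image_swap_eq_self (iff_of_false heS₂ hpS₂)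
  rw [hg, hg, hS₁v, hS₂v] at key
  rw [Finset.sum_insert (fun h' => hpKF (Finset.mem_of_mem_erase h')),
    Finset.sum_insert (fun h' => hqKF (Finset.mem_of_mem_erase h')),
    Finset.sum_erase_eq_sub (mem_KF.mpr he)] at key
  linarith

private lemma winners_affine (a b' : ℝ) (ha : 0 < a) (g g' : Committee m k → ℝ)
    (hrel : ∀ S, g S = a * g' S + b') (E : Election m) :
    winners g E = winners g' E := by
  have hs : ∀ S, score g E S = a * score g' E S + E.n * b' := by
    intro S
    unfold score
    calc ∑ i : Fin E.n, g (commPos (E.vote i) S)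
        = ∑ i : Fin E.n, (a * g' (commPos (E.vote i) S) + b') :=
          Finset.sum_congr rfl (fun i _ => hrel _)
      _ = a * ∑ i : Fin E.n, g' (commPos (E.vote i) S) + E.n * b' := by
          rw [Finset.sum_add_distrib, ← Finset.mul_sum, Finset.sum_const, Finset.card_univ,
            Fintype.card_fin, nsmul_eq_mul]
  ext S
  simp only [winners, Set.mem_setOf_eq]
  constructor
  · intro hS T
    have h' := hS T
    rw [hs, hs] at h'
    exact (mul_le_mul_iff_right₀ ha).mp (by linarith)
  · intro hS T
    have h' := hS T
    rw [hs S, hs T]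
    nlinarith

private lemma winners_eq_of_unique (g g' : Committee m k → ℝ) (E : Election m)
    (huniq : ∀ S T : Committee m k, S = T) : winners g E = winners g' E := by
  ext S
  simp only [winners, Set.mem_setOf_eq]
  constructor <;> intro _ T <;> rw [huniq T S]

end BlocAux

/-- Bloc is the only nontrivial committee scoring rule that is both
weakly separable and top-`k`-counting. -/
theorem bloc_unique_weakly_separable_topk
    (f : ∀ m k, Committee m k → ℝ) (hf : ∀ m k, IsCSF (f m k))
    (hnt : NonDegenerate f)
    (hws : WeaklySeparableRule f) (htk : TopKCountingRule f) :
    SameRule f blocF := by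
  obtain ⟨G, hGcsf, hGws, hGsame⟩ := hws
  obtain ⟨H, hHcsf, hHtk, hHsame⟩ := htk
  intro m k E
  rcases Nat.eq_zero_or_pos k with hk0 | hk
  · subst hk0
    exact winners_eq_of_unique _ _ E (fun S T => Subtype.ext
      ((Finset.card_eq_zero.mp S.2).trans (Finset.card_eq_zero.mp T.2).symm))
  rcases lt_or_ge k m with hkm | hmk
  swap
  · -- k ≥ m : the committee is unique (or there are none)
    have hm : ∀ S : Committee m k, S.1 = Finset.univ := by
      intro S
      apply Finset.eq_univ_of_card
      have h1 := Finset.card_le_univ S.1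
      rw [S.2, Fintype.card_fin] at h1 ⊢
      omega
    exact winners_eq_of_unique _ _ E (fun S T => Subtype.ext ((hm S).trans (hm T).symm))
  -- main case 0 < k < m
  obtain ⟨γ, ⟨hanti, hγ0⟩, hgdef⟩ := hGws m k
  obtain ⟨c, hcmono, hc0, hhdef⟩ := hHtk m k
  have hsameGH : ∀ E' : Election m, winners (G m k) E' = winners (H m k) E' :=
    fun E' => (hGsame m k E').symm.trans (hHsame m k E')
  have hhdef' : ∀ S : Committee m k, H m k S = c (cnt k S.1) := hhdef
  set a := γ ⟨k - 1, by omega⟩ with hadef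
  set b := γ ⟨k, hkm⟩ with hbdef
  have hval : ∀ p : Fin m, γ p = if (p : ℕ) < k then a else b := by
    intro p
    split
    · exact gamma_top hk hkm (G m k) (H m k) γ hgdef c hcmono hhdef' hsameGH
        p ⟨k - 1, by omega⟩ (by assumption) (by simp; omega)
    · exact gamma_bot hk hkm (G m k) (H m k) γ hgdef c hcmono hhdef' hsameGH
        p ⟨k, hkm⟩ (by omega) (by simp)
  have hab : b ≤ a := hanti (by rw [Fin.le_def]; show k - 1 ≤ k; omega)
  have hGbloc : ∀ S : Committee m k, G m k S = (a - b) * blocF m k S + b * k := by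
    intro S
    rw [hgdef]
    rw [← Finset.sum_filter_add_sum_filter_not S.1 (fun p : Fin m => (p : ℕ) < k)]
    have e1 : ∑ i ∈ S.1.filter (fun p : Fin m => (p : ℕ) < k), γ i
        = (cnt k S.1 : ℝ) * a := by
      rw [Finset.sum_congr rfl (fun i hi => by
        rw [hval i, if_pos (Finset.mem_filter.mp hi).2]), Finset.sum_const, nsmul_eq_mul]
      rfl
    have e2 : ∑ i ∈ S.1.filter (fun p : Fin m => ¬ (p : ℕ) < k), γ i
        = ((k : ℝ) - (cnt k S.1 : ℝ)) * b := by
      rw [Finset.sum_congr rfl (fun i hi => by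
        rw [hval i, if_neg (Finset.mem_filter.mp hi).2]), Finset.sum_const, nsmul_eq_mul]
      have hcard : cnt k S.1 + (S.1.filter (fun p : Fin m => ¬ (p : ℕ) < k)).card = k := by
        have h' := Finset.card_filter_add_card_filter_not
          (s := S.1) (p := fun p : Fin m => (p : ℕ) < k)
        rw [S.2] at h'
        exact h'
      have : ((S.1.filter (fun p : Fin m => ¬ (p : ℕ) < k)).card : ℝ)
          = (k : ℝ) - (cnt k S.1 : ℝ) := by
        have := congrArg (fun n : ℕ => (n : ℝ)) hcard
        push_cast at this
        linarith
      rw [this]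
    rw [e1, e2]
    show _ = (a - b) * ((cnt k S.1 : ℕ) : ℝ) + b * k
    ring
  have hne : a ≠ b := by
    intro hab'
    obtain ⟨S, T, hST⟩ := hnt m k hk hkm
    apply hST
    set Eid : Election m := ⟨1, fun _ => Equiv.refl (Fin m)⟩ with hEid
    have hscoreid : ∀ (φ : Committee m k → ℝ) (U : Committee m k),
        score φ Eid U = φ U := by
      intro φ U
      show ∑ _i : Fin 1, φ (commPos (Equiv.refl (Fin m)) U) = φ U
      rw [Fin.sum_univ_one]
      congr 1
      exact Subtype.ext (by simp [commPos])
    have hwin : ∀ U : Committee m k, U ∈ winners (G m k) Eid := by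
      intro U T'
      rw [hscoreid, hscoreid, hGbloc, hGbloc, hab']
      ring_nf
      exact le_rfl
    have hSw : S ∈ winners (f m k) Eid := by rw [hGsame m k Eid]; exact hwin S
    have hTw : T ∈ winners (f m k) Eid := by rw [hGsame m k Eid]; exact hwin T
    have h1 := hSw T
    have h2 := hTw S
    rw [hscoreid, hscoreid] at h1 h2
    linarith
  have hpos : 0 < a - b := sub_pos.mpr (lt_of_le_of_ne hab (Ne.symm hne))
  calc winners (f m k) E = winners (G m k) E := hGsame m k E
    _ = winners (blocF m k) E := winners_affine (a - b) (b * k) hpos _ _ hGbloc E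
end

section
/- Every weakly separable committee scoring rule is OWA-based, every representation-focused committee scoring rule is OWA-based, and every top-k-counting committee scoring rule is OWA-based. In particular, weakly separable rules arise from the OWA operator (1,1,...,1), representation-focused rules from the OWA operator (1,0,...,0), and every top-k-counting rule can be represented using the k-Approval single-winner scoring function together with a suitable OWA operator. -/
open Finset

lemma sum_posAt {m k : ℕ} (γ : Fin m → ℝ) (S : Committee m k) :
    ∑ t : Fin k, γ (posAt S t) = ∑ i ∈ S.1, γ i := by
  rw [← Finset.sum_coe_sort S.1 γ]
  exact Fintype.sum_equiv (S.1.orderIsoOfFin S.2).toEquiv _ _ (fun t => rfl)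

lemma posAt_strictMono {m k : ℕ} (S : Committee m k) : StrictMono (posAt S) :=
  fun _ _ h => (S.1.orderIsoOfFin S.2).strictMono h

lemma posAt_lt_iff {m k : ℕ} (S : Committee m k) (t : Fin k) :
    ((posAt S t : Fin m) : ℕ) < k ↔
      (t : ℕ) < (S.1.filter (fun p : Fin m => (p : ℕ) < k)).card := by
  set A : Finset (Fin k) := univ.filter (fun u : Fin k => ((posAt S u : Fin m) : ℕ) < k) with hA
  have hinj : Function.Injective (posAt S) := (posAt_strictMono S).injective
  have himg : A.image (posAt S) = S.1.filter (fun p : Fin m => (p : ℕ) < k) := by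
    ext p
    simp only [hA, mem_image, mem_filter, mem_univ, true_and]
    constructor
    · rintro ⟨u, hu, rfl⟩
      exact ⟨(S.1.orderIsoOfFin S.2 u).2, hu⟩
    · rintro ⟨hp, hlt⟩
      exact ⟨(S.1.orderIsoOfFin S.2).symm ⟨p, hp⟩, by
        simpa [posAt] using hlt, by simp [posAt]⟩
  have hcard : A.card = (S.1.filter (fun p : Fin m => (p : ℕ) < k)).card := by
    rw [← himg, Finset.card_image_of_injective _ hinj]
  rw [← hcard]
  constructor
  · intro h
    have hsub : Finset.Iic t ⊆ A := by
      intro u hu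
      simp only [Finset.mem_Iic] at hu
      simp only [hA, mem_filter, mem_univ, true_and]
      have : posAt S u ≤ posAt S t := (posAt_strictMono S).monotone hu
      exact lt_of_le_of_lt (Fin.le_iff_val_le_val.mp this) h
    have := Finset.card_le_card hsub
    rw [Fin.card_Iic] at this
    omega
  · intro h
    by_contra hc
    push_neg at hc
    have hsub : A ⊆ Finset.Iio t := by
      intro u hu
      simp only [hA, mem_filter, mem_univ, true_and] at hu
      simp only [Finset.mem_Iio]
      by_contra hu2
      push_neg at hu2
      have : posAt S t ≤ posAt S u := (posAt_strictMono S).monotone hu2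
      exact absurd (lt_of_le_of_lt (Fin.le_iff_val_le_val.mp this) hu) (not_lt.mpr hc)
    have := Finset.card_le_card hsub
    rw [Fin.card_Iio] at this
    omega

lemma winners_eq_of_shift {m k : ℕ} (f g : Committee m k → ℝ) (E : Election m) (b : ℝ)
    (h : ∀ S, f S = g S + b) : winners f E = winners g E := by
  have hsc : ∀ S, score f E S = score g E S + E.n * b := by
    intro S
    simp only [score, h, Finset.sum_add_distrib, Finset.sum_const, card_univ,
      Fintype.card_fin, nsmul_eq_mul]
  ext S
  simp only [winners, Set.mem_setOf_eq]
  constructor <;> intro hS T <;> have h1 := hS T <;> rw [hsc S, hsc T] at * <;> linarith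

/-- weakly separable, representation-focused, and top-`k`-counting
committee scoring rules are all OWA-based; moreover, weakly separable rules use
the OWA operator `(1,…,1)`, representation-focused rules use `(1,0,…,0)`, and
top-`k`-counting rules can be represented with the `k`-Approval single-winner
scoring function and a suitable OWA operator. -/
theorem subclasses_are_owa_based :
    (∀ (m k : ℕ) (f : Committee m k → ℝ), IsCSF f → WeaklySeparable f →
      ∃ (lam : Fin k → ℝ) (γ : Fin m → ℝ), (∀ t, lam t = 1) ∧ IsSWSF γ ∧
        ∀ E : Election m,
          winners f E = winners (fun S => ∑ t : Fin k, lam t * γ (posAt S t)) E) ∧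
    (∀ (m k : ℕ) (f : Committee m k → ℝ), 0 < k → IsCSF f → RepFocused f →
      ∃ (lam : Fin k → ℝ) (γ : Fin m → ℝ),
        (∀ t : Fin k, lam t = if (t : ℕ) = 0 then 1 else 0) ∧ IsSWSF γ ∧
        ∀ E : Election m,
          winners f E = winners (fun S => ∑ t : Fin k, lam t * γ (posAt S t)) E) ∧
    (∀ (m k : ℕ) (f : Committee m k → ℝ), IsCSF f → TopKCounting f →
      ∃ lam : Fin k → ℝ, (∀ t, 0 ≤ lam t) ∧
        ∀ E : Election m,
          winners f E =
            winners (fun S => ∑ t : Fin k,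
              lam t * (if ((posAt S t : Fin m) : ℕ) < k then (1 : ℝ) else 0)) E) := by
  refine ⟨?_, ?_, ?_⟩
  · rintro m k f _ ⟨γ, hγ, hf⟩
    refine ⟨fun _ => 1, γ, fun _ => rfl, hγ, fun E => ?_⟩
    refine winners_eq_of_shift _ _ E 0 (fun S => ?_)
    simp [hf S, one_mul, sum_posAt]
  · rintro m k f hk _ ⟨γ, hγ, hf⟩
    refine ⟨fun t => if (t : ℕ) = 0 then 1 else 0, γ, fun _ => rfl, hγ, fun E => ?_⟩
    refine winners_eq_of_shift _ _ E 0 (fun S => ?_)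
    rw [hf S hk, add_zero]
    have key : ∀ t : Fin k,
        (if (t : ℕ) = 0 then (1 : ℝ) else 0) * γ (posAt S t)
          = if t = (⟨0, hk⟩ : Fin k) then γ (posAt S t) else 0 := by
      intro t
      have h0 : ((t : ℕ) = 0) ↔ t = (⟨0, hk⟩ : Fin k) := by
        constructor
        · intro h; exact Fin.ext h
        · intro h; rw [h]
      rw [ite_mul, one_mul, zero_mul]
      simp [h0]
    rw [Finset.sum_congr rfl (fun t _ => key t)]
    simp
  · rintro m k f _ ⟨g, hmono, _, hf⟩
    refine ⟨fun t => g ((t : ℕ) + 1) - g (t : ℕ), fun t => ?_, fun E => ?_⟩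
    · have := hmono (t : ℕ) ((t : ℕ) + 1) (Nat.le_succ _) t.2
      exact sub_nonneg.mpr this
    · refine winners_eq_of_shift _ _ E (g 0) (fun S => ?_)
      set c := (S.1.filter (fun p : Fin m => (p : ℕ) < k)).card with hc
      have hck : c ≤ k := le_trans (Finset.card_le_card (Finset.filter_subset _ _))
        (le_of_eq S.2)
      have key : ∀ t : Fin k,
          (g ((t : ℕ) + 1) - g (t : ℕ)) * (if ((posAt S t : Fin m) : ℕ) < k then (1 : ℝ) else 0)
            = if (t : ℕ) < c then g ((t : ℕ) + 1) - g (t : ℕ) else 0 := by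
        intro t
        rw [mul_ite, mul_one, mul_zero]
        simp [posAt_lt_iff S t, hc]
      rw [hf S, ← hc]
      rw [Finset.sum_congr rfl (fun t _ => key t),
        Fin.sum_univ_eq_sum_range (fun i => if i < c then g (i + 1) - g i else 0) k,
        ← Finset.sum_filter]
      have hfil : (Finset.range k).filter (fun i => i < c) = Finset.range c := by
        ext i
        simp only [Finset.mem_filter, Finset.mem_range]
        omega
      rw [hfil, Finset.sum_range_sub g]
      ring
end

section
/- The multithreshold committee scoring rule defined by f_{m,k}(i_1,...,i_k) = α_{p_1}(i_1) + α_{p_2}(i_2), where p_1, p_2 ∈ {2,...,m−k−2} and p_1 > p_2 + 1 ≥ 3, is not OWA-based: there is no OWA operator (λ_1,...,λ_k) and single-winner scoring function γ such that f_{m,k} is a positive affine transformation of (i_1,...,i_k) ↦ Σ_t λ_t γ(i_t). -/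
open Finset

/-- The explicit strictly increasing sequence `x, y, m-k+2, …, m-1`. -/
def cfun (m k x y : ℕ) (hx : x < y) (hy : y + k ≤ m + 1) (t : Fin k) : Fin m :=
  ⟨if t.1 = 0 then x else if t.1 = 1 then y else m - k + t.1, by
    rcases t with ⟨t, ht⟩; dsimp only; split_ifs <;> omega⟩

lemma cfun_strictMono (m k x y : ℕ) (hx : x < y) (hy : y + k ≤ m + 1) :
    StrictMono (cfun m k x y hx hy) := by
  intro s t hst
  rcases s with ⟨s, hs⟩; rcases t with ⟨t, ht⟩
  simp only [Fin.lt_def] at hst ⊢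
  simp only [cfun]
  split_ifs <;> omega

lemma cfun_zero (m k x y : ℕ) (hx : x < y) (hy : y + k ≤ m + 1) (h0 : 0 < k) :
    ((cfun m k x y hx hy ⟨0, h0⟩ : Fin m) : ℕ) = x := by
  simp [cfun]

lemma cfun_one (m k x y : ℕ) (hx : x < y) (hy : y + k ≤ m + 1) (h1 : 1 < k) :
    ((cfun m k x y hx hy ⟨1, h1⟩ : Fin m) : ℕ) = y := by
  simp [cfun]

/-- The committee `{x, y, m-k+2, …, m-1}`. -/
def mkC (m k x y : ℕ) (hx : x < y) (hy : y + k ≤ m + 1) : Committee m k :=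
  ⟨Finset.image (cfun m k x y hx hy) Finset.univ, by
    rw [Finset.card_image_of_injective _ (cfun_strictMono m k x y hx hy).injective,
      Finset.card_univ, Fintype.card_fin]⟩

lemma posAt_mkC (m k x y : ℕ) (hx : x < y) (hy : y + k ≤ m + 1) (t : Fin k) :
    posAt (mkC m k x y hx hy) t = cfun m k x y hx hy t := by
  have h := Finset.orderEmbOfFin_unique (mkC m k x y hx hy).2
    (f := cfun m k x y hx hy)
    (fun s => Finset.mem_image_of_mem _ (Finset.mem_univ s))
    (cfun_strictMono m k x y hx hy)
  have : posAt (mkC m k x y hx hy) t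
      = (mkC m k x y hx hy).1.orderEmbOfFin (mkC m k x y hx hy).2 t := rfl
  rw [this, ← h]

lemma sum_diff_single {k m : ℕ} (lam : Fin k → ℝ) (γ : Fin m → ℝ)
    (c d : Fin k → Fin m) (t₀ : Fin k) (h : ∀ t, t ≠ t₀ → c t = d t) :
    (∑ t : Fin k, lam t * γ (c t)) - ∑ t : Fin k, lam t * γ (d t)
      = lam t₀ * (γ (c t₀) - γ (d t₀)) := by
  rw [← Finset.sum_sub_distrib,
    Finset.sum_eq_single_of_mem t₀ (Finset.mem_univ _)
      (fun t _ ht => by rw [h t ht]; ring)]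
  ring

/-- the multithreshold committee scoring function
`f(i₁,…,i_k) = α_{p₁}(i₁) + α_{p₂}(i₂)` (with `p₁, p₂ ∈ {2,…,m-k-2}` and
`p₁ > p₂ + 1 ≥ 3`) is not OWA-based: it is not a positive affine transformation
of any function of the form `Σ_t λ_t γ(i_t)` with nonnegative OWA weights and a
nonincreasing single-winner scoring function. -/
theorem multithreshold_not_owa_based
    (m k p₁ p₂ : ℕ) (hk : 2 ≤ k) (hkm : k ≤ m)
    (hp₂ : 3 ≤ p₂ + 1) (hp₂₁ : p₂ + 1 < p₁) (hp₁ : p₁ ≤ m - k - 2) :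
    ¬ ∃ (lam : Fin k → ℝ) (γ : Fin m → ℝ) (a b : ℝ),
        0 < a ∧ (∀ t, 0 ≤ lam t) ∧ IsSWSF γ ∧
        ∀ S : Committee m k,
          ((if ((posAt S ⟨0, by omega⟩ : Fin m) : ℕ) < p₁ then (1 : ℝ) else 0) +
           (if ((posAt S ⟨1, by omega⟩ : Fin m) : ℕ) < p₂ then (1 : ℝ) else 0)) =
            a * (∑ t : Fin k, lam t * γ (posAt S t)) + b := by
  rintro ⟨lam, γ, a, b, ha, hlam, hγ, hf⟩
  have hm : p₁ + k + 2 ≤ m := by omega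
  have h0k : 0 < k := by omega
  have h1k : 1 < k := by omega
  have hx1 : p₂ - 2 < p₂ - 1 := by omega
  have hy1 : p₂ - 1 + k ≤ m + 1 := by omega
  have hx2 : p₂ - 2 < p₂ := by omega
  have hy2 : p₂ + k ≤ m + 1 := by omega
  have hx3 : p₂ - 1 < p₁ := by omega
  have hy3 : p₁ + k ≤ m + 1 := by omega
  have hx4 : p₂ < p₁ := by omega
  have hx5 : p₂ - 1 < p₁ + 1 := by omega
  have hy5 : p₁ + 1 + k ≤ m + 1 := by omega
  have hx6 : p₁ < p₁ + 1 := by omega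
  have e1 := hf (mkC m k (p₂-2) (p₂-1) hx1 hy1)
  have e2 := hf (mkC m k (p₂-2) p₂ hx2 hy2)
  have e3 := hf (mkC m k (p₂-1) p₁ hx3 hy3)
  have e4 := hf (mkC m k p₂ p₁ hx4 hy3)
  have e5 := hf (mkC m k (p₂-1) (p₁+1) hx5 hy5)
  have e6 := hf (mkC m k p₁ (p₁+1) hx6 hy5)
  simp only [posAt_mkC, cfun_zero, cfun_one] at e1 e2 e3 e4 e5 e6
  rw [if_pos (show p₂ - 2 < p₁ by omega), if_pos (show p₂ - 1 < p₂ by omega)] at e1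
  rw [if_pos (show p₂ - 2 < p₁ by omega), if_neg (show ¬ p₂ < p₂ by omega)] at e2
  rw [if_pos hx3, if_neg (show ¬ p₁ < p₂ by omega)] at e3
  rw [if_pos hx4, if_neg (show ¬ p₁ < p₂ by omega)] at e4
  rw [if_pos hx3, if_neg (show ¬ p₁ + 1 < p₂ by omega)] at e5
  rw [if_neg (show ¬ p₁ < p₁ by omega), if_neg (show ¬ p₁ + 1 < p₂ by omega)] at e6
  have d12 := sum_diff_single lam γ (cfun m k (p₂-2) (p₂-1) hx1 hy1)
    (cfun m k (p₂-2) p₂ hx2 hy2) ⟨1, h1k⟩ (by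
      intro t ht
      have ht' : t.1 ≠ 1 := fun h => ht (Fin.ext h)
      apply Fin.ext
      simp only [cfun]
      split_ifs <;> omega)
  have d34 := sum_diff_single lam γ (cfun m k (p₂-1) p₁ hx3 hy3)
    (cfun m k p₂ p₁ hx4 hy3) ⟨0, h0k⟩ (by
      intro t ht
      have ht' : t.1 ≠ 0 := fun h => ht (Fin.ext h)
      apply Fin.ext
      simp only [cfun]
      split_ifs <;> omega)
  have d56 := sum_diff_single lam γ (cfun m k (p₂-1) (p₁+1) hx5 hy5)
    (cfun m k p₁ (p₁+1) hx6 hy5) ⟨0, h0k⟩ (by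
      intro t ht
      have ht' : t.1 ≠ 0 := fun h => ht (Fin.ext h)
      apply Fin.ext
      simp only [cfun]
      split_ifs <;> omega)
  -- unify the `Fin m` atoms across the three difference equations
  have uA : cfun m k (p₂-2) (p₂-1) hx1 hy1 ⟨1, h1k⟩
      = cfun m k (p₂-1) p₁ hx3 hy3 ⟨0, h0k⟩ := Fin.ext (by simp [cfun])
  have uB : cfun m k (p₂-2) p₂ hx2 hy2 ⟨1, h1k⟩
      = cfun m k p₂ p₁ hx4 hy3 ⟨0, h0k⟩ := Fin.ext (by simp [cfun])
  have uA' : cfun m k (p₂-1) (p₁+1) hx5 hy5 ⟨0, h0k⟩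
      = cfun m k (p₂-1) p₁ hx3 hy3 ⟨0, h0k⟩ := Fin.ext (by simp [cfun])
  rw [uA, uB] at d12
  rw [uA'] at d56
  set A := cfun m k (p₂-1) p₁ hx3 hy3 ⟨0, h0k⟩ with hA
  set B := cfun m k p₂ p₁ hx4 hy3 ⟨0, h0k⟩ with hB
  set C := cfun m k p₁ (p₁+1) hx6 hy5 ⟨0, h0k⟩ with hC
  have E1 : a * (lam ⟨1, h1k⟩ * (γ A - γ B)) = 1 := by
    linear_combination e2 - e1 - a * d12
  have E2 : a * (lam ⟨0, h0k⟩ * (γ A - γ B)) = 0 := by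
    linear_combination e4 - e3 - a * d34
  have E3 : a * (lam ⟨0, h0k⟩ * (γ A - γ C)) = 1 := by
    linear_combination e6 - e5 - a * d56
  have hL0 : lam ⟨0, h0k⟩ ≠ 0 := by
    intro h
    rw [h, zero_mul, mul_zero] at E3
    norm_num at E3
  have hD : γ A - γ B = 0 := by
    rcases mul_eq_zero.1 E2 with h | h
    · exact absurd h (ne_of_gt ha)
    · rcases mul_eq_zero.1 h with h' | h'
      · exact absurd h' hL0
      · exact h'
  rw [hD, mul_zero, mul_zero] at E1
  norm_num at E1
end
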